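/- arXiv:1207.5256 — 7 statements merged into one kernel-verified Lean document; each statement's English description precedes it below -/
import Mathlib

section
/- Let H be a finite group and S an integral domain of characteristic 0. If v is a torsion unit in the group ring SH of augmentation 1 such that the partial augmentation of v at some central element a of H is a nonzero integer, then v = a. -/
open scoped Classical

/-- The partial augmentation of `m` at `a`: the sum of the coefficients of `m`
over the conjugacy class of `a`. -/
noncomputable def partialAug {S H : Type*} [CommRing S] [Group H] [Fintype H]
    (a : H) (m : MonoidAlgebra S H) : S :=
  ∑ h ∈ Finset.univ.filter (fun h => IsConj a h), m.coeff h

/-- The augmentation of `m`: the sum of all its coefficients. -/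
noncomputable def totalAug {S H : Type*} [CommRing S] [Group H]
    (m : MonoidAlgebra S H) : S :=
  m.coeff.sum fun _ c => c

lemma BH.multiset_real_all_one (T : Multiset ℝ) (h1 : ∀ x ∈ T, x ≤ 1)
    (hsum : T.sum = T.card) : ∀ x ∈ T, x = 1 := by
  induction T using Multiset.induction_on with
  | empty => simp
  | cons a s ih =>
    have ha : a ≤ 1 := h1 a (Multiset.mem_cons_self a s)
    have hs : ∀ x ∈ s, x ≤ 1 := fun x hx => h1 x (Multiset.mem_cons_of_mem hx)
    have hsle : s.sum ≤ (Multiset.card s : ℝ) := by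
      simpa using Multiset.sum_le_card_nsmul s 1 hs
    have hsum' : a + s.sum = 1 + (Multiset.card s : ℝ) := by
      simpa [Multiset.sum_cons, Multiset.card_cons, add_comm] using hsum
    have ha1 : a = 1 := le_antisymm ha (by linarith)
    have hss : s.sum = (Multiset.card s : ℝ) := by linarith
    intro x hx
    rcases Multiset.mem_cons.mp hx with h | h
    · exact h ▸ ha1
    · exact ih hs hss x h

lemma BH.complex_all_eq (U : Multiset ℂ) (hUpos : 0 < Multiset.card U)
    (habs : ∀ z ∈ U, ‖z‖ = 1) (n : ℤ) (hn : n ≠ 0)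
    (hsum : U.sum = (Multiset.card U : ℂ) * n) : ∀ z ∈ U, z = (n : ℂ) := by
  set m : ℕ := Multiset.card U with hm
  have habs_sum : ‖U.sum‖ ≤ (m : ℝ) := by
    calc ‖U.sum‖ ≤ (U.map (fun z => ‖z‖)).sum := norm_multiset_sum_le U
      _ ≤ (m : ℝ) := by
        have := Multiset.sum_le_card_nsmul (U.map (fun z => ‖z‖)) 1
          (by intro x hx; rcases Multiset.mem_map.mp hx with ⟨z, hz, rfl⟩; exact le_of_eq (habs z hz))
        simpa using this
  have hnorm : ‖U.sum‖ = (m : ℝ) * |(n : ℝ)| := by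
    rw [hsum]; rw [norm_mul]; simp [abs_of_nonneg, Complex.norm_intCast]
  have hn1 : |(n:ℝ)| ≤ 1 := by
    rw [hnorm] at habs_sum
    have hmpos : (0:ℝ) < m := by exact_mod_cast hUpos
    nlinarith
  have hn1' : (n : ℝ) = 1 ∨ (n : ℝ) = -1 := by
    have h1n : (1:ℤ) ≤ |n| := Int.one_le_abs hn
    have : (1:ℝ) ≤ |(n:ℝ)| := by rw [← Int.cast_abs]; exact_mod_cast h1n
    have habs1 : |(n:ℝ)| = 1 := le_antisymm hn1 this
    rcases abs_eq (by norm_num : (0:ℝ) ≤ 1) |>.mp habs1 with h | h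
    · exact Or.inl h
    · exact Or.inr h
  have hnn : (n:ℝ) * n = 1 := by rcases hn1' with h | h <;> rw [h] <;> norm_num
  have hnnC : (n:ℂ) * n = 1 := by
    have : ((n:ℝ) * n : ℝ) = (1:ℝ) := hnn
    exact_mod_cast congrArg (Complex.ofReal) this
  -- consider real parts of z * n
  set V : Multiset ℝ := U.map (fun z => (z * (n:ℂ)).re) with hV
  have hV1 : ∀ x ∈ V, x ≤ 1 := by
    intro x hx
    rcases Multiset.mem_map.mp hx with ⟨z, hz, rfl⟩
    calc (z * n).re ≤ ‖z * n‖ := Complex.re_le_norm _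
      _ = ‖z‖ * ‖(n:ℂ)‖ := norm_mul _ _
      _ ≤ 1 := by
        rw [habs z hz, one_mul, Complex.norm_intCast]
        exact_mod_cast hn1
  have hVsum : V.sum = (Multiset.card V : ℝ) := by
    have h1 : ∀ (W : Multiset ℂ), (W.map (fun z => (z * (n:ℂ)).re)).sum = (W.sum * (n:ℂ)).re := by
      intro W
      induction W using Multiset.induction_on with
      | empty => simp
      | cons a s ih =>
        rw [Multiset.map_cons, Multiset.sum_cons, ih, Multiset.sum_cons, add_mul, Complex.add_re]
    rw [hV, h1, hsum, mul_assoc, hnnC, mul_one]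
    simp [hV, hm]
  have hall := BH.multiset_real_all_one V hV1 hVsum
  intro z hz
  have hre : (z * n).re = 1 := hall _ (Multiset.mem_map_of_mem _ hz)
  have habsz : ‖z * (n:ℂ)‖ = 1 := by
    rw [norm_mul, habs z hz, one_mul, Complex.norm_intCast]
    exact_mod_cast (by rcases hn1' with h | h <;> rw [h] <;> norm_num : |(n:ℝ)| = 1)
  have him : (z * n).im = 0 := by
    have hsq : (z*n).re ^ 2 + (z*n).im ^ 2 = 1 := by
      have := Complex.sq_norm (z * n)
      rw [Complex.normSq_apply] at this
      nlinarith [this]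
    nlinarith [hre, hsq]
  have hzn : z * n = 1 := Complex.ext (by simp [hre]) (by simp [him])
  calc z = z * ((n:ℂ) * n) := by rw [hnnC, mul_one]
    _ = (z * n) * n := by ring
    _ = n := by rw [hzn, one_mul]

/-- In a char-0 field, if a multiset of `K`-th roots of unity sums to `card * n`
for a nonzero integer `n`, then all its elements equal `n`. -/
lemma BH.field_all_eq {L : Type*} [Field L] [CharZero L] {K : ℕ} (hK : K ≠ 0)
    (T : Multiset L) (hT : 0 < Multiset.card T)
    (hroot : ∀ z ∈ T, z ^ K = 1) (n : ℤ) (hn : n ≠ 0)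
    (hsum : T.sum = (Multiset.card T : L) * n) : ∀ z ∈ T, z = (n : L) := by
  set setS : Set L := {z | z ∈ T} with hsetS
  have hint : ∀ x ∈ setS, IsIntegral ℚ x := by
    intro x hx
    refine ⟨Polynomial.X ^ K - Polynomial.C 1, Polynomial.monic_X_pow_sub_C 1 hK, ?_⟩
    rw [Polynomial.eval₂_sub, Polynomial.eval₂_X_pow, Polynomial.eval₂_C, map_one,
      hroot x hx, sub_self]
  set F := IntermediateField.adjoin ℚ setS with hF
  haveI : Algebra.IsAlgebraic ℚ F := IntermediateField.isAlgebraic_adjoin hint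
  let φ : F →ₐ[ℚ] ℂ := IsAlgClosed.lift
  have hφinj : Function.Injective φ := φ.toRingHom.injective
  have hmemF : ∀ z ∈ T, z ∈ F := fun z hz => IntermediateField.subset_adjoin ℚ setS hz
  set T' : Multiset F := T.pmap (fun z hz => (⟨z, hz⟩ : F)) hmemF with hT'
  have hmapT' : T'.map (fun x : F => (x : L)) = T := by
    rw [hT', Multiset.map_pmap]
    exact Multiset.pmap_eq_map _ _ T hmemF ▸ (by simp [Multiset.pmap_eq_map])
  have hcardT' : Multiset.card T' = Multiset.card T := by rw [hT', Multiset.card_pmap]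
  have hcoe_sum : ((T'.sum : F) : L) = T.sum := by
    have h := map_multiset_sum F.val T'
    rw [← hmapT']
    convert h using 2
    all_goals rfl
  -- elements of T' are K-th roots of unity
  have hrootT' : ∀ x ∈ T', x ^ K = 1 := by
    intro x hx
    rcases Multiset.mem_pmap.mp (hT' ▸ hx) with ⟨z, hz, rfl⟩
    apply Subtype.coe_injective
    push_cast
    exact hroot z hz
  have hsumT' : T'.sum = (Multiset.card T : F) * (n : F) := by
    apply Subtype.coe_injective
    show ((T'.sum : F) : L) = _
    rw [hcoe_sum, hsum]
    push_cast
    ring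
  set U : Multiset ℂ := T'.map (fun x => φ x) with hU
  have hcardU : Multiset.card U = Multiset.card T := by rw [hU, Multiset.card_map, hcardT']
  have habsU : ∀ w ∈ U, ‖w‖ = 1 := by
    intro w hw
    rcases Multiset.mem_map.mp (hU ▸ hw) with ⟨x, hx, rfl⟩
    have hxK : (φ x) ^ K = 1 := by rw [← map_pow, hrootT' x hx, map_one]
    have hnormK : ‖φ x‖ ^ K = 1 := by rw [← norm_pow, hxK, norm_one]
    have h0 : (0:ℝ) ≤ ‖φ x‖ := norm_nonneg _
    rcases (pow_eq_one_iff_cases).mp hnormK with h | h | h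
    · exact absurd h hK
    · exact h
    · exact absurd h.1 (by intro h1; rw [h1] at h0; linarith)
  have hsumU : U.sum = (Multiset.card U : ℂ) * n := by
    rw [hU, ← map_multiset_sum, hsumT', map_mul, map_natCast, map_intCast,
      Multiset.card_map, hcardT']
  have hall := BH.complex_all_eq U (by rw [hcardU]; exact hT) habsU n hn hsumU
  intro z hz
  have hzT' : (⟨z, hmemF z hz⟩ : F) ∈ T' := by
    rw [hT']
    exact Multiset.mem_pmap.mpr ⟨z, hz, rfl⟩
  have : φ ⟨z, hmemF z hz⟩ = (n : ℂ) := hall _ (Multiset.mem_map_of_mem _ hzT')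
  have : (⟨z, hmemF z hz⟩ : F) = (n : F) := hφinj (by rw [this, map_intCast])
  have := congrArg (fun x : F => (x : L)) this
  simpa using this

set_option maxHeartbeats 1000000 in
/-- Berman–Higman: let `H` be a finite group and `S` an integral domain of
characteristic `0`.  If `v` is a torsion unit in `SH` of augmentation `1` such
that the partial augmentation of `v` at some central element `a` of `H` is a
nonzero (rational) integer, then `v = a`. -/
theorem stmt0 {H : Type*} [Group H] [Fintype H]
    {S : Type*} [CommRing S] [IsDomain S] [CharZero S]
    (v : (MonoidAlgebra S H)ˣ) (hfin : IsOfFinOrder v)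
    (haug : totalAug (v : MonoidAlgebra S H) = 1)
    (a : H) (ha : a ∈ Subgroup.center H)
    (n : ℤ) (hn : n ≠ 0)
    (hpa : partialAug a (v : MonoidAlgebra S H) = (n : S)) :
    (v : MonoidAlgebra S H) = MonoidAlgebra.of S H a := by
  classical
  -- Step 1: the coefficient of `v` at `a` is `n`.
  have hfilter : Finset.univ.filter (fun h => IsConj a h) = {a} := by
    ext h
    simp only [Finset.mem_filter, Finset.mem_univ, true_and, Finset.mem_singleton]
    constructor
    · intro hc
      rcases isConj_iff.mp hc with ⟨c, rfl⟩
      rw [(Subgroup.mem_center_iff.mp ha) c, mul_inv_cancel_right]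
    · rintro rfl; exact IsConj.refl _
  have hva : (v : MonoidAlgebra S H).coeff a = (n : S) := by
    rw [partialAug, hfilter, Finset.sum_singleton] at hpa; exact hpa
  -- Step 2: `w := a⁻¹ * v` is a torsion element of the group ring with `w 1 = n`.
  set w : MonoidAlgebra S H := MonoidAlgebra.single a⁻¹ (1:S) * ↑v with hw
  have hainv : a⁻¹ ∈ Subgroup.center H := Subgroup.inv_mem _ ha
  have hcomm : Commute (MonoidAlgebra.single a⁻¹ (1:S)) (↑v : MonoidAlgebra S H) := by
    show _ = _
    ext x
    rw [MonoidAlgebra.single_mul_apply, MonoidAlgebra.mul_single_apply, one_mul, mul_one,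
      inv_inv, (Subgroup.mem_center_iff.mp ha) x]
  set K : ℕ := orderOf a * orderOf v with hK
  have hKne : K ≠ 0 := by
    have h1 : orderOf a ≠ 0 := (orderOf_pos a).ne'
    have h2 : orderOf v ≠ 0 := hfin.orderOf_pos.ne'
    positivity
  have hwK : w ^ K = 1 := by
    have h1 : (MonoidAlgebra.single a⁻¹ (1:S) : MonoidAlgebra S H) ^ K = 1 := by
      rw [MonoidAlgebra.single_pow, one_pow, inv_pow, hK, pow_mul, pow_orderOf_eq_one,
        one_pow, inv_one]
      exact MonoidAlgebra.one_def.symm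
    have h2 : (↑v : MonoidAlgebra S H) ^ K = 1 := by
      rw [← Units.val_pow_eq_pow_val, hK, pow_mul', pow_orderOf_eq_one, one_pow, Units.val_one]
    rw [hw, hcomm.mul_pow, h1, h2, one_mul]
  have hw1 : w.coeff 1 = (n : S) := by
    rw [hw, MonoidAlgebra.single_mul_apply, one_mul, inv_inv, mul_one, hva]
  -- Step 3: move to an algebraically closed field of characteristic zero.
  let Kf := FractionRing S
  let L := AlgebraicClosure Kf
  haveI : CharZero Kf := charZero_of_injective_algebraMap (IsFractionRing.injective S Kf)
  haveI : CharZero L := charZero_of_injective_algebraMap (algebraMap Kf L).injective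
  set f : S →+* L := (algebraMap Kf L).comp (algebraMap S Kf) with hf
  have hfinj : Function.Injective f :=
    (algebraMap Kf L).injective.comp (IsFractionRing.injective S Kf)
  -- the coefficientwise map of group rings
  have hcommf : ∀ (x : S) (y : H),
      Commute ((MonoidAlgebra.singleOneRingHom.comp f) x) ((MonoidAlgebra.of L H) y) := by
    intro x y
    have key : MonoidAlgebra.single (1:H) (f x) * MonoidAlgebra.single y (1:L)
        = MonoidAlgebra.single y (1:L) * MonoidAlgebra.single (1:H) (f x) := by
      rw [MonoidAlgebra.single_mul_single, MonoidAlgebra.single_mul_single, one_mul, mul_one,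
        one_mul, mul_one]
    exact key
  set ψ : MonoidAlgebra S H →+* MonoidAlgebra L H :=
    MonoidAlgebra.liftNCRingHom (MonoidAlgebra.singleOneRingHom.comp f)
      (MonoidAlgebra.of L H) hcommf with hψdef
  have hψsingle : ∀ (g : H) (s : S), ψ (MonoidAlgebra.single g s) = MonoidAlgebra.single g (f s) := by
    intro g s
    have h1 : ψ (MonoidAlgebra.single g s)
        = (MonoidAlgebra.singleOneRingHom.comp f) s * (MonoidAlgebra.of L H) g :=
      MonoidAlgebra.liftNC_single _ _ _ _
    have key : MonoidAlgebra.single (1:H) (f s) * MonoidAlgebra.single g (1:L)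
        = MonoidAlgebra.single g (f s) := by
      rw [MonoidAlgebra.single_mul_single, one_mul, mul_one]
    exact h1.trans key
  have hψ : ∀ (m : MonoidAlgebra S H) (x : H), (ψ m).coeff x = f (m.coeff x) := by
    intro m
    induction m using MonoidAlgebra.induction with
    | zero => intro x; simp
    | single_add g s rest hgs hs ih =>
      intro x
      have h2 : ψ (MonoidAlgebra.single g s + rest) = ψ (MonoidAlgebra.single g s) + ψ rest :=
        map_add ψ (MonoidAlgebra.single g s) rest
      rw [h2, hψsingle]
      have h3 : (MonoidAlgebra.single g (f s) + ψ rest).coeff x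
          = (MonoidAlgebra.single g (f s)).coeff x + (ψ rest).coeff x := rfl
      have h4 : (MonoidAlgebra.single g s + rest).coeff x = Finsupp.single g s x + rest.coeff x :=
        rfl
      rw [h3, h4, map_add f, ih x]
      congr 1
      rw [show (MonoidAlgebra.single g (f s)).coeff x = Finsupp.single g (f s) x from rfl,
        Finsupp.single_apply, Finsupp.single_apply]
      split
      · rfl
      · exact (map_zero f).symm
  have hψinj : Function.Injective ψ := by
    intro m1 m2 h
    ext x
    exact hfinj (by rw [← hψ, ← hψ, h])
  -- Step 4: pass to the matrix of left multiplication
  set u : MonoidAlgebra L H := ψ w with hu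
  have huK : u ^ K = 1 := by rw [hu, ← map_pow, hwK, map_one]
  have hu1 : u.coeff 1 = (n : L) := by rw [hu, hψ, hw1, map_intCast]
  let b : Module.Basis H L (MonoidAlgebra L H) := MonoidAlgebra.basis H L
  have hb : ∀ h : H, b h = MonoidAlgebra.single h 1 := fun h => rfl
  have hbr : ∀ (x : MonoidAlgebra L H) (h : H), b.repr x h = x.coeff h := fun x h => rfl
  set A : Matrix H H L := Algebra.leftMulMatrix b u with hA
  have hAentry : ∀ i j : H, A i j = ((u * MonoidAlgebra.single j 1 : MonoidAlgebra L H)).coeff i := by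
    intro i j
    rw [hA, Algebra.leftMulMatrix_eq_repr_mul, hb j, hbr]
  have htrace : A.trace = (Fintype.card H : L) * n := by
    have hdiag : ∀ i : H, A i i = (n : L) := by
      intro i
      rw [hAentry, MonoidAlgebra.mul_single_apply, mul_inv_cancel, hu1, mul_one]
    rw [Matrix.trace]
    calc ∑ i : H, A.diag i = ∑ _i : H, (n : L) := Finset.sum_congr rfl (fun i _ => hdiag i)
      _ = (Fintype.card H : L) * n := by
        rw [Finset.sum_const, Finset.card_univ, nsmul_eq_mul]
  -- Step 5: roots of the characteristic polynomial
  set P := A.charpoly with hP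
  have hPmonic : P.Monic := A.charpoly_monic
  have hPdeg : P.natDegree = Fintype.card H := A.charpoly_natDegree_eq_dim
  have hPsplits : P.Splits := IsAlgClosed.splits P
  set T := P.roots with hT2
  have hTsum : T.sum = A.trace := (Matrix.trace_eq_sum_roots_charpoly A).symm
  have hTcard : Multiset.card T = Fintype.card H := by
    have h := hPsplits.natDegree_eq_card_roots
    rw [hT2, ← h, hPdeg]
  have hAK : A ^ K = 1 := by rw [hA, ← map_pow, huK, map_one]
  have hrootsK : ∀ r ∈ T, r ^ K = 1 := by
    intro r hr
    have hr' : P.IsRoot r := (Polynomial.mem_roots (hPmonic.ne_zero)).mp (hT2 ▸ hr)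
    -- the evaluation of the charpoly is a determinant
    have hdet : (Matrix.diagonal (fun _ : H => r) - A).det = 0 := by
      have h1 := RingHom.map_det (Polynomial.evalRingHom r) (Matrix.charmatrix A)
      have h2 : (Polynomial.evalRingHom r) (Matrix.charmatrix A).det = 0 := by
        rw [← Matrix.charpoly]
        exact hr'
      rw [h2] at h1
      have h3 : (Polynomial.evalRingHom r).mapMatrix (Matrix.charmatrix A)
          = Matrix.diagonal (fun _ : H => r) - A := by
        ext i j
        simp only [RingHom.mapMatrix_apply, Matrix.map_apply, Matrix.charmatrix_apply,
          Polynomial.coe_evalRingHom, Polynomial.eval_sub, Polynomial.eval_C,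
          Matrix.sub_apply]
        congr 1
        by_cases hij : i = j
        · subst hij
          rw [Matrix.diagonal_apply_eq, Matrix.diagonal_apply_eq, Polynomial.eval_X]
        · rw [Matrix.diagonal_apply_ne _ hij, Matrix.diagonal_apply_ne _ hij,
            Polynomial.eval_zero]
      rw [h3] at h1
      exact h1.symm
    obtain ⟨x, hx0, hxv⟩ := Matrix.exists_mulVec_eq_zero_iff.mpr hdet
    have hAx : A.mulVec x = fun i => r * x i := by
      rw [Matrix.sub_mulVec] at hxv
      have hdiagv : (Matrix.diagonal (fun _ : H => r)).mulVec x = fun i => r * x i := by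
        funext i
        rw [Matrix.mulVec_diagonal]
      rw [hdiagv] at hxv
      funext i
      have := congrFun hxv i
      have h5 : r * x i - A.mulVec x i = 0 := this
      exact (sub_eq_zero.mp h5).symm
    have hlin : ∀ (M : Matrix H H L) (c : L) (y : H → L),
        M.mulVec (fun i => c * y i) = fun i => c * M.mulVec y i := by
      intro M c y
      funext i
      rw [Matrix.mulVec, dotProduct, Matrix.mulVec, dotProduct, Finset.mul_sum]
      apply Finset.sum_congr rfl
      intro j _
      ring
    have hpow : ∀ j : ℕ, (A ^ j).mulVec x = fun i => r ^ j * x i := by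
      intro j
      induction j with
      | zero =>
        rw [pow_zero, Matrix.one_mulVec]
        funext i
        rw [pow_zero, one_mul]
      | succ j ih =>
        rw [pow_succ, ← Matrix.mulVec_mulVec, hAx, hlin, ih]
        funext i
        rw [pow_succ]
        ring
    have hfin : x = fun i => r ^ K * x i := by
      rw [← hpow K, hAK, Matrix.one_mulVec]
    obtain ⟨i, hi⟩ := Function.ne_iff.mp hx0
    have : x i = r ^ K * x i := congrFun hfin i
    have hxi : x i ≠ 0 := by simpa using hi
    have h6 : (r ^ K - 1) * x i = 0 := by
      rw [sub_mul, one_mul, ← this]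
      ring
    rcases mul_eq_zero.mp h6 with h | h
    · exact sub_eq_zero.mp h
    · exact absurd h hxi
  -- Step 6: all roots are equal to n
  haveI : Nonempty H := ⟨1⟩
  have hcardpos : 0 < Fintype.card H := Fintype.card_pos
  have hTsum' : T.sum = ((Multiset.card T : L)) * n := by
    rw [hTsum, htrace, hTcard]
  have hallroots : ∀ z ∈ T, z = (n : L) :=
    BH.field_all_eq hKne T (by rw [hTcard]; exact hcardpos) hrootsK n hn hTsum'
  -- Step 7: the charpoly is (X - C n) ^ card H
  have hTrep : T = Multiset.replicate (Fintype.card H) ((n : L)) := by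
    rw [Multiset.eq_replicate]
    exact ⟨hTcard, hallroots⟩
  have hPeq : P = (Polynomial.X - Polynomial.C ((n : L))) ^ (Fintype.card H) := by
    have h := hPsplits.eq_prod_roots_of_monic hPmonic
    rw [← hT2, hTrep, Multiset.map_replicate, Multiset.prod_replicate] at h
    exact h
  -- Step 8: the minimal polynomial of A is X - C n
  have hAint : IsIntegral L A := ⟨P, hPmonic, A.aeval_self_charpoly⟩
  have hq1 : minpoly L A ∣ (Polynomial.X : Polynomial L) ^ K - 1 := by
    apply minpoly.dvd L A
    have h' : Polynomial.aeval A ((Polynomial.X : Polynomial L) ^ K - 1) = A ^ K - 1 := by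
      rw [map_sub, map_pow, Polynomial.aeval_X, map_one]
    rw [h', hAK, sub_self]
  have hq2 : minpoly L A ∣ (Polynomial.X - Polynomial.C ((n : L))) ^ (Fintype.card H) := by
    rw [← hPeq]
    exact minpoly.dvd L A (A.aeval_self_charpoly)
  have hprime : Prime (Polynomial.X - Polynomial.C ((n : L))) := Polynomial.prime_X_sub_C _
  obtain ⟨i, hi, hassoc⟩ := (dvd_prime_pow hprime _).mp hq2
  have hqmono : (minpoly L A).Monic := minpoly.monic hAint
  have hqeq : minpoly L A = (Polynomial.X - Polynomial.C ((n : L))) ^ i :=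
    Polynomial.eq_of_monic_of_associated hqmono ((Polynomial.monic_X_sub_C _).pow i) hassoc
  have hsep : (minpoly L A).Separable := by
    have hKcast : ((K : ℕ) : L) ≠ 0 := Nat.cast_ne_zero.mpr hKne
    have hsepK : ((Polynomial.X : Polynomial L) ^ K - Polynomial.C 1).Separable :=
      Polynomial.separable_X_pow_sub_C 1 hKcast one_ne_zero
    rw [Polynomial.C_1] at hsepK
    exact hsepK.of_dvd hq1
  have hi1 : i = 1 := by
    have hipos : i ≠ 0 := by
      intro h0
      rw [h0, pow_zero] at hqeq
      have := minpoly.natDegree_pos hAint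
      rw [hqeq, Polynomial.natDegree_one] at this
      exact absurd this (lt_irrefl 0)
    have hile : i ≤ 1 := by
      by_contra hgt
      push_neg at hgt
      have h2 : (Polynomial.X - Polynomial.C ((n : L))) * (Polynomial.X - Polynomial.C ((n : L)))
          ∣ minpoly L A := by
        rw [hqeq, ← pow_two]
        exact pow_dvd_pow _ hgt
      exact Polynomial.not_isUnit_X_sub_C _ (hsep.squarefree _ h2)
    omega
  rw [hi1, pow_one] at hqeq
  -- Step 9: A is scalar, hence u = n
  have hAeval : Polynomial.aeval A (minpoly L A) = 0 := minpoly.aeval L A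
  rw [hqeq, map_sub, Polynomial.aeval_X, Polynomial.aeval_C, sub_eq_zero] at hAeval
  have hu_eq : u = algebraMap L (MonoidAlgebra L H) ((n : L)) := by
    apply Algebra.leftMulMatrix_injective b
    rw [← hA, AlgHom.commutes]
    exact hAeval
  have hu_int : u = ((n : ℤ) : MonoidAlgebra L H) := by
    rw [hu_eq, map_intCast]
  -- Step 10: pull back and conclude
  have hw_int : w = ((n : ℤ) : MonoidAlgebra S H) := by
    apply hψinj
    rw [← hu, hu_int, map_intCast]
  have hncast : ((n : ℤ) : MonoidAlgebra S H) = MonoidAlgebra.single 1 ((n : ℤ) : S) := by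
    have h := map_intCast (MonoidAlgebra.singleOneRingHom : S →+* MonoidAlgebra S H) n
    have h2 : (MonoidAlgebra.singleOneRingHom : S →+* MonoidAlgebra S H) ((n : ℤ) : S)
        = MonoidAlgebra.single 1 ((n : ℤ) : S) := rfl
    rw [← h, h2]
  have hv_eq : (v : MonoidAlgebra S H) = MonoidAlgebra.single a ((n : ℤ) : S) := by
    have h1 : MonoidAlgebra.single a (1:S) * w = (v : MonoidAlgebra S H) := by
      rw [hw, ← mul_assoc, MonoidAlgebra.single_mul_single, mul_inv_cancel, mul_one]
      rw [show MonoidAlgebra.single (1:H) (1:S) = (1 : MonoidAlgebra S H) from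
        MonoidAlgebra.one_def.symm, one_mul]
    rw [← h1, hw_int, hncast, MonoidAlgebra.single_mul_single, mul_one, one_mul]
  have hn1 : (n : S) = 1 := by
    rw [hv_eq] at haug
    rw [totalAug, MonoidAlgebra.coeff_single] at haug
    rw [Finsupp.sum_single_index] at haug
    · exact haug
    · rfl
  have hn1' : n = 1 := by
    have : ((n : ℤ) : S) = ((1 : ℤ) : S) := by rw [hn1, Int.cast_one]
    exact_mod_cast Int.cast_injective this
  rw [hv_eq, hn1', Int.cast_one]
  rfl
end

section
/- Let G be a Frobenius group with Frobenius kernel K, written as K = N × L with N a Sylow p-subgroup and L the Sylow p-complement of K. Then for every nontrivial element x of N and elements a, a' of L, the elements xa and xa' are conjugate in G if and only if a and a' are conjugate in L. -/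
/-- Let `G` be a Frobenius group with Frobenius kernel `K` and complement `H`,
where `K = N × L` with `N` a Sylow `p`-subgroup of `G` and `L` the Sylow
`p`-complement of `K`.  Then for every nontrivial `x ∈ N` and `a, a' ∈ L`, the
elements `xa` and `xa'` are conjugate in `G` if and only if `a` and `a'` are
conjugate in `L`. -/
theorem stmt3 {G : Type*} [Group G] [Fintype G] (p : ℕ) [Fact p.Prime]
    (K H N L : Subgroup G)
    (hKnormal : K.Normal) (hKbot : K ≠ ⊥) (hHbot : H ≠ ⊥)
    (hcompl : K.IsComplement' H)
    (hfpf : ∀ h ∈ H, h ≠ 1 → ∀ k ∈ K, h * k * h⁻¹ = k → k = 1)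
    (hNK : N ≤ K) (hLK : L ≤ K) (hNnormal : N.Normal) (hLnormal : L.Normal)
    (hNL : N ⊓ L = ⊥) (hNLK : N ⊔ L = K)
    (hSyl : ∃ P : Sylow p G, (P : Subgroup G) = N)
    (hLp : ¬ p ∣ Nat.card L)
    (x a a' : G) (hx : x ∈ N) (hx1 : x ≠ 1) (ha : a ∈ L) (ha' : a' ∈ L) :
    IsConj (x * a) (x * a') ↔ ∃ l ∈ L, l * a * l⁻¹ = a' := by
  have hdis : Disjoint N L := disjoint_iff.mpr hNL
  have hcomm : ∀ n ∈ N, ∀ l ∈ L, n * l = l * n := fun n hn l hl =>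
    Subgroup.commute_of_normal_of_disjoint N L hNnormal hLnormal hdis n l hn hl
  rw [isConj_iff]
  constructor
  · rintro ⟨g, hg⟩
    have hu : g * x * g⁻¹ ∈ N := hNnormal.conj_mem x hx g
    have hv : g * a * g⁻¹ ∈ L := hLnormal.conj_mem a ha g
    have hsplit : (g * x * g⁻¹) * (g * a * g⁻¹) = x * a' := by
      rw [← hg]; group
    have heq : (g * x * g⁻¹)⁻¹ * x = (g * a * g⁻¹) * a'⁻¹ := by
      have h0 : (g * x * g⁻¹) * ((g * a * g⁻¹) * a'⁻¹) = x := by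
        rw [← mul_assoc, hsplit, mul_assoc, mul_inv_cancel, mul_one]
      calc (g * x * g⁻¹)⁻¹ * x
          = (g * x * g⁻¹)⁻¹ * ((g * x * g⁻¹) * ((g * a * g⁻¹) * a'⁻¹)) := by rw [h0]
        _ = (g * a * g⁻¹) * a'⁻¹ := inv_mul_cancel_left _ _
    have key : (g * x * g⁻¹)⁻¹ * x ∈ N ⊓ L := by
      constructor
      · exact N.mul_mem (N.inv_mem hu) hx
      · rw [heq]; exact L.mul_mem hv (L.inv_mem ha')
    rw [hNL] at key
    have hux : g * x * g⁻¹ = x := by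
      have := Subgroup.mem_bot.mp key
      rwa [inv_mul_eq_one] at this
    have hva : g * a * g⁻¹ = a' := by
      have : x * (g * a * g⁻¹) = x * a' := by rw [← hsplit, hux]
      exact mul_left_cancel this
    -- Show g ∈ K
    have hgK : g ∈ K := by
      obtain ⟨⟨⟨k, hk⟩, ⟨h, hh⟩⟩, hkh, -⟩ := hcompl.existsUnique g
      simp only at hkh
      by_cases hone : h = 1
      · rw [hone, mul_one] at hkh; rwa [← hkh]
      · exfalso
        have ψinj : Function.Injective
            (fun m : K => (⟨(m : G)⁻¹ * (h * m * h⁻¹),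
              K.mul_mem (K.inv_mem m.2) (hKnormal.conj_mem m m.2 h)⟩ : K)) := by
          intro m n hmn
          simp only [Subtype.mk.injEq] at hmn
          have e : (n:G) * ((m:G)⁻¹ * (h * m * h⁻¹)) * h * (m:G)⁻¹
              = (n:G) * ((n:G)⁻¹ * (h * n * h⁻¹)) * h * (m:G)⁻¹ := by rw [hmn]
          have e2 : (n:G) * (m:G)⁻¹ * h = h * ((n:G) * (m:G)⁻¹) := by
            group at e ⊢
            rw [e]
          have h1 : h * ((n:G) * (m:G)⁻¹) * h⁻¹ = (n:G) * (m:G)⁻¹ := by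
            rw [← e2, mul_inv_cancel_right]
          have := hfpf h hh hone ((n:G) * (m:G)⁻¹) (K.mul_mem n.2 (K.inv_mem m.2)) h1
          rw [mul_inv_eq_one] at this
          exact (Subtype.ext this).symm
        have ψsurj := Finite.injective_iff_surjective.mp ψinj
        obtain ⟨m, hm⟩ := ψsurj ⟨k, hk⟩
        simp only [Subtype.mk.injEq] at hm
        have hgm : g = (m : G)⁻¹ * h * m := by
          rw [← hkh, ← hm]; group
        rw [hgm] at hux
        have e := congrArg (fun z => (m:G) * z * (m:G)⁻¹) hux
        have h2 : h * ((m:G) * x * (m:G)⁻¹) * h⁻¹ = (m:G) * x * (m:G)⁻¹ := by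
          group at e ⊢
          rw [e]
        have h3 := hfpf h hh hone ((m:G) * x * (m:G)⁻¹)
          (hKnormal.conj_mem x (hNK hx) m) h2
        have : x = 1 := by
          have := congrArg (fun z => (m:G)⁻¹ * z * (m:G)) h3
          simpa [mul_assoc] using this
        exact hx1 this
    have hgNL : g ∈ (↑(N ⊔ L) : Set G) := by rw [hNLK]; exact hgK
    rw [Subgroup.normal_mul] at hgNL
    obtain ⟨n, hn, l, hl, hnl⟩ := hgNL
    refine ⟨l, hl, ?_⟩
    have hlal : l * a * l⁻¹ ∈ L := L.mul_mem (L.mul_mem hl ha) (L.inv_mem hl)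
    calc l * a * l⁻¹ = n * (l * a * l⁻¹) * n⁻¹ := by
          rw [hcomm n hn _ hlal]; group
      _ = g * a * g⁻¹ := by rw [← hnl]; group
      _ = a' := hva
  · rintro ⟨l, hl, hla⟩
    refine ⟨l, ?_⟩
    have h1 : l * x = x * l := (hcomm x hx l hl).symm
    calc l * (x * a) * l⁻¹ = x * (l * a * l⁻¹) := by
          rw [← mul_assoc, h1]; group
      _ = x * a' := by rw [hla]
end

section
/- Let G be a Frobenius group with Frobenius kernel K = N × L where N is a Sylow p-subgroup of G and L its complement in K. For any commutative ring R, any nontrivial x ∈ N, any a ∈ L, and any element m of the group ring RL, the partial augmentation of xm at xa taken with respect to G-conjugacy classes equals the partial augmentation of m at a taken with respect to L-conjugacy classes. -/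
open scoped Classical
open scoped Pointwise

/-- The partial augmentation of `m` at `g`, taken with respect to `G`-conjugacy
classes. -/
noncomputable def partialAugG {R G : Type*} [CommRing R] [Group G] [Fintype G]
    (g : G) (m : MonoidAlgebra R G) : R :=
  ∑ h ∈ Finset.univ.filter (fun h => IsConj g h), m.coeff h

/-- The partial augmentation of `m` at `a`, taken with respect to conjugacy
classes of the subgroup `L`. -/
noncomputable def partialAugL {R G : Type*} [CommRing R] [Group G] [Fintype G]
    (L : Subgroup G) (a : G) (m : MonoidAlgebra R G) : R :=
  ∑ h ∈ Finset.univ.filter (fun h => ∃ l ∈ L, l * a * l⁻¹ = h), m.coeff h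

/-- Let `G` be a Frobenius group with Frobenius kernel `K = N × L`, where `N`
is a Sylow `p`-subgroup of `G` and `L` its complement in `K`.  For any
commutative ring `R`, any nontrivial `x ∈ N`, any `a ∈ L`, and any element `m`
of the group ring `RL` (an element of `RG` supported on `L`), the partial
augmentation of `xm` at `xa` with respect to `G`-conjugacy classes equals the
partial augmentation of `m` at `a` with respect to `L`-conjugacy classes. -/
theorem stmt4 {G : Type*} [Group G] [Fintype G] (p : ℕ) [Fact p.Prime]
    (K H N L : Subgroup G)
    (hKnormal : K.Normal) (hKbot : K ≠ ⊥) (hHbot : H ≠ ⊥)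
    (hcompl : K.IsComplement' H)
    (hfpf : ∀ h ∈ H, h ≠ 1 → ∀ k ∈ K, h * k * h⁻¹ = k → k = 1)
    (hNK : N ≤ K) (hLK : L ≤ K) (hNnormal : N.Normal) (hLnormal : L.Normal)
    (hNL : N ⊓ L = ⊥) (hNLK : N ⊔ L = K)
    (hSyl : ∃ P : Sylow p G, (P : Subgroup G) = N)
    (hLp : ¬ p ∣ Nat.card L)
    {R : Type*} [CommRing R]
    (x a : G) (hx : x ∈ N) (hx1 : x ≠ 1) (ha : a ∈ L)
    (m : MonoidAlgebra R G) (hm : ∀ g ∈ m.coeff.support, g ∈ L) :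
    partialAugG (x * a) (MonoidAlgebra.of R G x * m) = partialAugL L a m := by
  classical
  have hdis : Disjoint N L := disjoint_iff.mpr hNL
  have hcomm : ∀ n ∈ N, ∀ l ∈ L, n * l = l * n := fun n hn l hl =>
    Subgroup.commute_of_normal_of_disjoint N L hNnormal hLnormal hdis n l hn hl
  -- surjectivity of u ↦ u⁻¹ (h u h⁻¹) on K, for 1 ≠ h ∈ H
  have hsurj : ∀ h ∈ H, h ≠ 1 → ∀ k₀ ∈ K, ∃ u ∈ K, u⁻¹ * (h * u * h⁻¹) = k₀ := by
    intro h hh hh1 k₀ hk₀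
    set f : K → K := fun u => u⁻¹ * ⟨h * u * h⁻¹, hKnormal.conj_mem _ u.2 h⟩ with hf
    have hinj : Function.Injective f := by
      intro u v huv
      have h1 : (u : G)⁻¹ * (h * u * h⁻¹) = (v : G)⁻¹ * (h * v * h⁻¹) := by
        have := congrArg (Subtype.val) huv
        simpa [hf] using this
      have h2 : h * ((v : G) * (u : G)⁻¹) * h⁻¹ = (v : G) * (u : G)⁻¹ := by
        have h1' : h * (v : G) * h⁻¹ = (v : G) * ((u : G)⁻¹ * (h * (u : G) * h⁻¹)) := by
          rw [h1]; group
        calc h * ((v : G) * (u : G)⁻¹) * h⁻¹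
            = (h * (v : G) * h⁻¹) * (h * (u : G)⁻¹ * h⁻¹) := by group
          _ = ((v : G) * ((u : G)⁻¹ * (h * (u : G) * h⁻¹))) * (h * (u : G)⁻¹ * h⁻¹) := by
              rw [h1']
          _ = (v : G) * (u : G)⁻¹ := by group
      have := hfpf h hh hh1 _ (K.mul_mem v.2 (K.inv_mem u.2)) h2
      have : (v : G) = u := by
        have := mul_inv_eq_one.mp this
        exact this
      exact (Subtype.ext this).symm
    have hfs : Function.Surjective f := Finite.injective_iff_surjective.mp hinj
    obtain ⟨u, hu⟩ := hfs ⟨k₀, hk₀⟩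
    refine ⟨u, u.2, ?_⟩
    have := congrArg Subtype.val hu
    simpa [hf] using this
  -- centralizer of x is contained in K
  have hcent : ∀ g : G, g * x * g⁻¹ = x → g ∈ K := by
    intro g hg
    obtain ⟨⟨k₀, h⟩, hkh, -⟩ := hcompl.existsUnique g
    simp only at hkh
    by_cases hh1 : (h : G) = 1
    · rw [← hkh, hh1, mul_one]; exact k₀.2
    · exfalso
      obtain ⟨u, hu, huk⟩ := hsurj h h.2 hh1 k₀ k₀.2
      have hg' : g = u⁻¹ * (h : G) * u := by
        rw [← hkh, ← huk]; group
      have hg2 : (u⁻¹ * (h : G) * u) * x * (u⁻¹ * (h : G) * u)⁻¹ = x := by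
        rw [← hg']; exact hg
      have hfix : (h : G) * (u * x * u⁻¹) * (h : G)⁻¹ = u * x * u⁻¹ := by
        calc (h : G) * (u * x * u⁻¹) * (h : G)⁻¹
            = u * ((u⁻¹ * (h : G) * u) * x * (u⁻¹ * (h : G) * u)⁻¹) * u⁻¹ := by group
          _ = u * x * u⁻¹ := by rw [hg2]
      have hux : u * x * u⁻¹ ∈ K := hKnormal.conj_mem x (hNK hx) u
      have h9 := hfpf h h.2 hh1 _ hux hfix
      apply hx1
      have : x = u⁻¹ * (u * x * u⁻¹) * u := by group
      rw [h9] at this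
      simpa using this
  -- decomposition of elements of K as n * l
  haveI := hNnormal
  have hKdec : ∀ k ∈ K, ∃ n ∈ N, ∃ l ∈ L, n * l = k := by
    intro k hk
    have hset : (K : Set G) = (N : Set G) * (L : Set G) := by
      rw [← hNLK]; exact Subgroup.normal_mul N L
    have hk' : k ∈ ((N : Set G) * (L : Set G)) := by rw [← hset]; exact hk
    obtain ⟨n, hn, l, hl, hnl⟩ := hk'
    exact ⟨n, hn, l, hl, hnl⟩
  -- key equivalence
  have hkey : ∀ b ∈ L, (IsConj (x * a) (x * b) ↔ ∃ l ∈ L, l * a * l⁻¹ = b) := by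
    intro b hb
    constructor
    · intro hconj
      obtain ⟨g, hg⟩ := isConj_iff.mp hconj
      have hgx : g * x * g⁻¹ ∈ N := hNnormal.conj_mem x hx g
      have hga : g * a * g⁻¹ ∈ L := hLnormal.conj_mem a ha g
      have hsplit : (g * x * g⁻¹) * (g * a * g⁻¹) = x * b := by
        rw [← hg]; group
      have hmem : x⁻¹ * (g * x * g⁻¹) ∈ N ⊓ L := by
        constructor
        · exact N.mul_mem (N.inv_mem hx) hgx
        · have he : x⁻¹ * (g * x * g⁻¹) = b * (g * a * g⁻¹)⁻¹ := by
            calc x⁻¹ * (g * x * g⁻¹)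
                = x⁻¹ * ((g * x * g⁻¹) * (g * a * g⁻¹)) * (g * a * g⁻¹)⁻¹ := by group
              _ = x⁻¹ * (x * b) * (g * a * g⁻¹)⁻¹ := by rw [hsplit]
              _ = b * (g * a * g⁻¹)⁻¹ := by group
          rw [he]
          exact L.mul_mem hb (L.inv_mem hga)
      rw [hNL] at hmem
      have h6 : g * x * g⁻¹ = x := by
        have h61 := Subgroup.mem_bot.mp hmem
        have h62 : g * x * g⁻¹ = x * (x⁻¹ * (g * x * g⁻¹)) := by group
        rw [h61] at h62
        simpa using h62
      have h7 : g * a * g⁻¹ = b := by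
        have := hsplit
        rw [h6] at this
        exact mul_left_cancel this
      have hgK : g ∈ K := hcent g h6
      obtain ⟨n, hn, l, hl, rfl⟩ := hKdec g hgK
      refine ⟨l, hl, ?_⟩
      have hlal : l * a * l⁻¹ ∈ L := L.mul_mem (L.mul_mem hl ha) (L.inv_mem hl)
      calc l * a * l⁻¹ = n * (l * a * l⁻¹) * n⁻¹ := by
            rw [hcomm n hn _ hlal]; group
        _ = (n * l) * a * (n * l)⁻¹ := by group
        _ = b := h7
    · rintro ⟨l, hl, hlb⟩
      refine isConj_iff.mpr ⟨l, ?_⟩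
      have hxl : x * l = l * x := hcomm x hx l hl
      calc l * (x * a) * l⁻¹ = (l * x * l⁻¹) * (l * a * l⁻¹) := by group
        _ = (l * x * l⁻¹) * b := by rw [hlb]
        _ = x * b := by rw [← hxl]; group
  -- now the sum computation
  unfold partialAugG partialAugL
  have happ : ∀ h : G, (MonoidAlgebra.of R G x * m).coeff h = m.coeff (x⁻¹ * h) := by
    intro h
    rw [MonoidAlgebra.of_apply, MonoidAlgebra.coeff_single_mul_apply, one_mul]
  rw [Finset.sum_congr rfl (fun h _ => happ h)]
  have hre : ∑ h ∈ Finset.univ.filter (fun h => IsConj (x * a) h), m.coeff (x⁻¹ * h)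
      = ∑ b ∈ Finset.univ.filter (fun b => IsConj (x * a) (x * b)), m.coeff b := by
    refine Finset.sum_nbij' (fun h => x⁻¹ * h) (fun b => x * b) ?_ ?_ ?_ ?_ ?_
    · intro h hh
      simp only [Finset.mem_filter, Finset.mem_univ, true_and] at hh ⊢
      rwa [mul_inv_cancel_left]
    · intro b hb
      simp only [Finset.mem_filter, Finset.mem_univ, true_and] at hb ⊢
      exact hb
    · intro h _; simp
    · intro b _; simp
    · intro h _; rfl
  rw [hre]
  have e1 : ∑ b ∈ Finset.univ.filter (fun b => IsConj (x * a) (x * b)), m.coeff b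
      = ∑ b ∈ m.coeff.support.filter (fun b => IsConj (x * a) (x * b)), m.coeff b := by
    refine (Finset.sum_subset (Finset.filter_subset_filter _ (Finset.subset_univ _)) ?_).symm
    intro b hb hb'
    simp only [Finset.mem_filter, Finset.mem_univ, true_and] at hb
    simp only [Finset.mem_filter, hb, and_true] at hb'
    exact Finsupp.notMem_support_iff.mp hb'
  have e2 : ∑ b ∈ Finset.univ.filter (fun h => ∃ l ∈ L, l * a * l⁻¹ = h), m.coeff b
      = ∑ b ∈ m.coeff.support.filter (fun h => ∃ l ∈ L, l * a * l⁻¹ = h), m.coeff b := by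
    refine (Finset.sum_subset (Finset.filter_subset_filter _ (Finset.subset_univ _)) ?_).symm
    intro b hb hb'
    simp only [Finset.mem_filter, Finset.mem_univ, true_and] at hb
    simp only [Finset.mem_filter, hb, and_true] at hb'
    exact Finsupp.notMem_support_iff.mp hb'
  rw [e1, e2]
  apply Finset.sum_congr _ (fun _ _ => rfl)
  apply Finset.filter_congr
  intro b hb
  simpa using hkey b (hm b hb)
end

section
/- Let G be a finite group, S a commutative ring, and α, α' : H → (SG)^× two group homomorphisms from a finite group H into the units of augmentation 1 of SG. Then α and α' are S-equivalent (i.e., there is a unit u in SG with α(h) = u^{-1} α'(h) u for all h ∈ H) if and only if the S(G × H)-modules ₁(SG)_α and ₁(SG)_{α'} are isomorphic. -/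
/-- For a homomorphism `α : H → (SG)ˣ`, the bimodule `₁(SG)_α`: the group
`G × H` acts on `SG` by `(g,h) • m = g m α(h)⁻¹` (this left action encodes the
right action `m(g,h) = g⁻¹ m α(h)` of the paper). -/
noncomputable def bimodRep {S G H : Type*} [CommRing S] [Group G] [Group H]
    (α : H →* (MonoidAlgebra S G)ˣ) :
    Representation S (G × H) (MonoidAlgebra S G) where
  toFun gh :=
    (LinearMap.mulLeft S (MonoidAlgebra.of S G gh.1)).comp
      (LinearMap.mulRight S ((α gh.2⁻¹ : (MonoidAlgebra S G)ˣ) : MonoidAlgebra S G))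
  map_one' := by
    ext m
    simp
  map_mul' a b := by
    ext m
    simp [mul_assoc, mul_inv_rev]

lemma bimodRep_apply {S G H : Type*} [CommRing S] [Group G] [Group H]
    (α : H →* (MonoidAlgebra S G)ˣ) (gh : G × H) (m : MonoidAlgebra S G) :
    bimodRep α gh m =
      MonoidAlgebra.of S G gh.1 *
        (m * ((α gh.2⁻¹ : (MonoidAlgebra S G)ˣ) : MonoidAlgebra S G)) := rfl

/-- Key computation: if `v` intertwines `α` and `α'` (i.e. `α(h) v = v α'(h)`),
then right multiplication by `v` intertwines the two algebra actions. -/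
lemma asAlgebraHom_mul_right {S G H : Type*} [CommRing S] [Group G] [Group H]
    (α α' : H →* (MonoidAlgebra S G)ˣ) (v : MonoidAlgebra S G)
    (hv : ∀ h : H, ((α h : (MonoidAlgebra S G)ˣ) : MonoidAlgebra S G) * v =
      v * ((α' h : (MonoidAlgebra S G)ˣ) : MonoidAlgebra S G))
    (r : MonoidAlgebra S (G × H)) (x : MonoidAlgebra S G) :
    ((bimodRep α).asAlgebraHom r x) * v = (bimodRep α').asAlgebraHom r (x * v) := by
  induction r using MonoidAlgebra.induction_linear with
  | zero => simp
  | add f g hf hg => simp [map_add, add_mul, hf, hg]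
  | single gh c =>
      simp only [Representation.asAlgebraHom_single, LinearMap.smul_apply,
        bimodRep_apply, smul_mul_assoc]
      congr 1
      rw [mul_assoc, mul_assoc, mul_assoc, hv]

/-- Let `G` be a finite group, `S` a commutative ring, and
`α, α' : H → V(SG)` two homomorphisms from a finite group `H` into the units
of augmentation `1` of `SG`.  Then `α` and `α'` are `S`-equivalent (conjugate
by a unit of `SG`) if and only if the `S(G × H)`-modules `₁(SG)_α` and
`₁(SG)_{α'}` are isomorphic. -/
theorem stmt5 {S G H : Type*} [CommRing S] [Group G] [Fintype G]
    [Group H] [Fintype H]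
    (α α' : H →* (MonoidAlgebra S G)ˣ)
    (hα : ∀ h, totalAug ((α h : MonoidAlgebra S G)) = 1)
    (hα' : ∀ h, totalAug ((α' h : MonoidAlgebra S G)) = 1) :
    (∃ u : (MonoidAlgebra S G)ˣ, ∀ h : H, α h = u⁻¹ * α' h * u) ↔
    Nonempty ((bimodRep α).asModule ≃ₗ[MonoidAlgebra S (G × H)]
      (bimodRep α').asModule) := by
  set e := (bimodRep α).asModuleEquiv with he
  set e' := (bimodRep α').asModuleEquiv with he'
  constructor
  · rintro ⟨u, hu⟩
    have hv : ∀ h : H, ((α h : (MonoidAlgebra S G)ˣ) : MonoidAlgebra S G) *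
        ((↑u⁻¹ : MonoidAlgebra S G)) =
        (↑u⁻¹ : MonoidAlgebra S G) * ((α' h : (MonoidAlgebra S G)ˣ) : MonoidAlgebra S G) := by
      intro h
      have huu : (α h) * u⁻¹ = u⁻¹ * α' h := by
        rw [hu h]; group
      exact_mod_cast congrArg ((↑·) : (MonoidAlgebra S G)ˣ → MonoidAlgebra S G) huu
    refine ⟨{ toFun := fun m => e'.symm (e m * (↑u⁻¹ : MonoidAlgebra S G))
              invFun := fun m => e.symm (e' m * (u : MonoidAlgebra S G))
              map_add' := ?_
              map_smul' := ?_
              left_inv := ?_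
              right_inv := ?_ }⟩
    · intro a b; simp [add_mul]
    · intro r m
      apply e'.injective
      rw [Representation.asModuleEquiv_map_smul, LinearEquiv.apply_symm_apply,
        RingHom.id_apply, he', Representation.asModuleEquiv_map_smul, LinearEquiv.apply_symm_apply]
      simp only [← he, ← he', RingHom.id_apply]
      exact asAlgebraHom_mul_right α α' _ hv r (e m)
    · intro m
      apply e.injective
      simp [mul_assoc]
    · intro m
      apply e'.injective
      simp [mul_assoc]
  · rintro ⟨φ⟩
    -- translate φ to a map on `MonoidAlgebra S G`
    set ψ : MonoidAlgebra S G → MonoidAlgebra S G :=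
      fun x => e' (φ (e.symm x)) with hψ
    set ψ' : MonoidAlgebra S G → MonoidAlgebra S G :=
      fun x => e (φ.symm (e'.symm x)) with hψ'
    have hψadd : ∀ a b, ψ (a + b) = ψ a + ψ b := by intro a b; simp [hψ]
    have hlin : ∀ (r : MonoidAlgebra S (G × H)) (x : MonoidAlgebra S G),
        ψ ((bimodRep α).asAlgebraHom r x) = (bimodRep α').asAlgebraHom r (ψ x) := by
      intro r x
      have h1 : e.symm ((bimodRep α).asAlgebraHom r x) = r • e.symm x := by
        apply e.injective
        rw [Representation.asModuleEquiv_map_smul, LinearEquiv.apply_symm_apply,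
          LinearEquiv.apply_symm_apply]
      rw [hψ]
      simp only [h1, map_smul]
      rw [Representation.asModuleEquiv_map_smul]
    -- ψ commutes with S-scalars
    have hS : ∀ (s : S) (x : MonoidAlgebra S G), ψ (s • x) = s • ψ x := by
      intro s x
      have h := hlin (MonoidAlgebra.single (1, 1) s) x
      simpa [Representation.asAlgebraHom_single, bimodRep_apply,
        smul_mul_assoc, mul_smul_comm, ← MonoidAlgebra.one_def] using h
    -- ψ commutes with left multiplication by group elements
    have hG : ∀ (g : G) (x : MonoidAlgebra S G),
        ψ (MonoidAlgebra.of S G g * x) = MonoidAlgebra.of S G g * ψ x := by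
      intro g x
      have h := hlin (MonoidAlgebra.single (g, (1 : H)) (1 : S)) x
      simpa [Representation.asAlgebraHom_single, bimodRep_apply] using h
    -- hence ψ commutes with all left multiplications
    have hmul : ∀ (x y : MonoidAlgebra S G), ψ (x * y) = x * ψ y := by
      intro x y
      induction x using MonoidAlgebra.induction_linear with
      | zero => simp [hψ]
      | add f g hf hg => rw [add_mul, hψadd, hf, hg, add_mul]
      | single g s =>
          have h2 : MonoidAlgebra.single g s = s • MonoidAlgebra.of S G g := by
            rw [MonoidAlgebra.of_apply, MonoidAlgebra.smul_single', mul_one]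
          show ψ (MonoidAlgebra.single g s * y) = MonoidAlgebra.single g s * ψ y
          rw [h2, smul_mul_assoc, hS, hG, smul_mul_assoc]
    set u0 : MonoidAlgebra S G := ψ 1 with hu0
    set v0 : MonoidAlgebra S G := ψ' 1 with hv0
    have hψeq : ∀ x, ψ x = x * u0 := by
      intro x
      have h := hmul x 1
      simpa using h
    -- ψ' is a two-sided inverse of ψ
    have hψψ' : ∀ x, ψ' (ψ x) = x := by intro x; simp [hψ, hψ']
    have hψ'ψ : ∀ x, ψ (ψ' x) = x := by intro x; simp [hψ, hψ']
    -- ψ' is also left-mult equivariant: ψ'(x) = x * v0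
    have hlin' : ∀ (r : MonoidAlgebra S (G × H)) (x : MonoidAlgebra S G),
        ψ' ((bimodRep α').asAlgebraHom r x) = (bimodRep α).asAlgebraHom r (ψ' x) := by
      intro r x
      have h1 : e'.symm ((bimodRep α').asAlgebraHom r x) = r • e'.symm x := by
        apply e'.injective
        rw [Representation.asModuleEquiv_map_smul, LinearEquiv.apply_symm_apply,
          LinearEquiv.apply_symm_apply]
      rw [hψ']
      simp only [h1, map_smul]
      rw [Representation.asModuleEquiv_map_smul]
    have hψ'add : ∀ a b, ψ' (a + b) = ψ' a + ψ' b := by intro a b; simp [hψ']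
    have hS' : ∀ (s : S) (x : MonoidAlgebra S G), ψ' (s • x) = s • ψ' x := by
      intro s x
      have h := hlin' (MonoidAlgebra.single (1, 1) s) x
      simpa [Representation.asAlgebraHom_single, bimodRep_apply,
        smul_mul_assoc, mul_smul_comm, ← MonoidAlgebra.one_def] using h
    have hG' : ∀ (g : G) (x : MonoidAlgebra S G),
        ψ' (MonoidAlgebra.of S G g * x) = MonoidAlgebra.of S G g * ψ' x := by
      intro g x
      have h := hlin' (MonoidAlgebra.single (g, (1 : H)) (1 : S)) x
      simpa [Representation.asAlgebraHom_single, bimodRep_apply] using h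
    have hmul' : ∀ (x y : MonoidAlgebra S G), ψ' (x * y) = x * ψ' y := by
      intro x y
      induction x using MonoidAlgebra.induction_linear with
      | zero => simp [hψ']
      | add f g hf hg => rw [add_mul, hψ'add, hf, hg, add_mul]
      | single g s =>
          have h2 : MonoidAlgebra.single g s = s • MonoidAlgebra.of S G g := by
            rw [MonoidAlgebra.of_apply, MonoidAlgebra.smul_single', mul_one]
          show ψ' (MonoidAlgebra.single g s * y) = MonoidAlgebra.single g s * ψ' y
          rw [h2, smul_mul_assoc, hS', hG', smul_mul_assoc]
    have hψ'eq : ∀ x, ψ' x = x * v0 := by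
      intro x
      have h := hmul' x 1
      simpa using h
    have huv : u0 * v0 = 1 := by
      have h := hψψ' 1
      rwa [hψeq, one_mul, hψ'eq] at h
    have hvu : v0 * u0 = 1 := by
      have h := hψ'ψ 1
      rwa [hψ'eq, one_mul, hψeq] at h
    refine ⟨(⟨u0, v0, huv, hvu⟩ : (MonoidAlgebra S G)ˣ)⁻¹, fun h => ?_⟩
    set w : (MonoidAlgebra S G)ˣ := ⟨u0, v0, huv, hvu⟩ with hw
    rw [inv_inv]
    -- intertwining with (1, h)
    have key : ∀ h : H, ((α h : (MonoidAlgebra S G)ˣ) : MonoidAlgebra S G) * u0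
        = u0 * ((α' h : (MonoidAlgebra S G)ˣ) : MonoidAlgebra S G) := by
      intro h
      have hk := hlin (MonoidAlgebra.single ((1 : G), h⁻¹) (1 : S)) 1
      simp only [Representation.asAlgebraHom_single, one_smul,
        bimodRep_apply, map_one, one_mul, inv_inv] at hk
      rw [hψeq, hψeq, one_mul] at hk
      simpa using hk
    have keyu : (α h) * w = w * (α' h) := by
      apply Units.ext
      rw [Units.val_mul, Units.val_mul]
      exact key h
    calc α h = (α h * w) * w⁻¹ := by group
    _ = (w * α' h) * w⁻¹ := by rw [keyu]
    _ = w * α' h * w⁻¹ := rfl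
end

section
/- Let G be a Frobenius group with Frobenius kernel K, and let N be the Sylow p-subgroup of K. The quotient group Ḡ = G/Z(N) is again a Frobenius group (with Frobenius kernel K/Z(N)). -/
/-- `G` is a Frobenius group with Frobenius kernel `K`: `K` is a nontrivial
proper normal subgroup admitting a complement `H` every nontrivial element of
which acts fixed-point-freely on `K`. -/
def IsFrobeniusKernel {G : Type*} [Group G] (K : Subgroup G) : Prop :=
  K.Normal ∧ K ≠ ⊥ ∧ K ≠ ⊤ ∧
  ∃ H : Subgroup G, K.IsComplement' H ∧
    ∀ h ∈ H, h ≠ 1 → ∀ k ∈ K, h * k * h⁻¹ = k → k = 1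

/-- Twisted conjugation action of a subgroup `M` on (the coset `c • S` of) a
subgroup `S`. -/
def twistMulAction {G : Type*} [Group G] (M S : Subgroup G) (c : G)
    (hmem : ∀ m ∈ M, ∀ z ∈ S, c⁻¹ * (m * (c * z) * m⁻¹) ∈ S) :
    MulAction ↥M ↥S where
  smul m z := ⟨c⁻¹ * ((m : G) * (c * (z : G)) * (m : G)⁻¹), hmem m m.2 z z.2⟩
  one_smul z := by
    ext
    show c⁻¹ * ((1 : G) * (c * (z : G)) * (1 : G)⁻¹) = (z : G)
    group
  mul_smul m₁ m₂ z := by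
    ext
    show c⁻¹ * ((m₁ : G) * (m₂ : G) * (c * (z : G)) * ((m₁ : G) * (m₂ : G))⁻¹)
        = c⁻¹ * ((m₁ : G) * (c * (c⁻¹ * ((m₂ : G) * (c * (z : G)) * (m₂ : G)⁻¹))) * (m₁ : G)⁻¹)
    group

/-- If an `r`-group `M` acts by twisted conjugation on a coset `c • S` with
`r ∤ |S|`, there is a fixed point. -/
theorem exists_twisted_fixed {G : Type*} [Group G] [Fintype G] {r : ℕ} [Fact r.Prime]
    (M S : Subgroup G) (hM : IsPGroup r ↥M) (c : G)
    (hmem : ∀ m ∈ M, ∀ z ∈ S, c⁻¹ * (m * (c * z) * m⁻¹) ∈ S)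
    (hnd : ¬ r ∣ Nat.card S) :
    ∃ z ∈ S, ∀ m ∈ M, m * (c * z) * m⁻¹ = c * z := by
  letI : MulAction ↥M ↥S := twistMulAction M S c hmem
  obtain ⟨⟨z, hz⟩, hfix⟩ := hM.nonempty_fixed_point_of_prime_not_dvd_card ↥S hnd
  refine ⟨z, hz, fun m hm => ?_⟩
  have h1 : (⟨m, hm⟩ : ↥M) • (⟨z, hz⟩ : ↥S) = ⟨z, hz⟩ := hfix ⟨m, hm⟩
  have h2 : c⁻¹ * (m * (c * z) * m⁻¹) = z := congrArg Subtype.val h1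
  calc m * (c * z) * m⁻¹ = c * (c⁻¹ * (m * (c * z) * m⁻¹)) := by group
    _ = c * z := by rw [h2]

/-- If a nontrivial element of an `r`-group `M` acts fixed-point-freely by
conjugation on a normal subgroup `K`, then `|K| ≡ 1 (mod r)`. -/
theorem conj_card_modEq_one {G : Type*} [Group G] [Fintype G] {r : ℕ} [Fact r.Prime]
    (M K : Subgroup G) (hM : IsPGroup r ↥M) [hKn : K.Normal]
    (h : G) (hh : h ∈ M) (hne : h ≠ 1)
    (hfree : ∀ k ∈ K, h * k * h⁻¹ = k → k = 1) :
    Nat.card K ≡ 1 [MOD r] := by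
  have hmem : ∀ m ∈ M, ∀ z ∈ K, (1 : G)⁻¹ * (m * (1 * z) * m⁻¹) ∈ K := by
    intro m hm z hzK
    simpa using hKn.conj_mem z hzK m
  letI : MulAction ↥M ↥K := twistMulAction M K 1 hmem
  have hfp : MulAction.fixedPoints ↥M ↥K = {(1 : ↥K)} := by
    apply Set.eq_singleton_iff_unique_mem.mpr
    constructor
    · intro m
      ext
      show (1 : G)⁻¹ * ((m : G) * (1 * ((1 : ↥K) : G)) * (m : G)⁻¹) = ((1 : ↥K) : G)
      simp
    · rintro ⟨x, hx⟩ hfix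
      have h1 : (⟨h, hh⟩ : ↥M) • (⟨x, hx⟩ : ↥K) = ⟨x, hx⟩ := hfix ⟨h, hh⟩
      have h2 : (1 : G)⁻¹ * (h * (1 * x) * h⁻¹) = x := congrArg Subtype.val h1
      have h3 : h * x * h⁻¹ = x := by
        calc h * x * h⁻¹ = (1 : G)⁻¹ * (h * (1 * x) * h⁻¹) := by group
          _ = x := h2
      exact Subtype.ext (hfree x hx h3)
  have hmod := hM.card_modEq_card_fixedPoints ↥K
  have hone : Nat.card (MulAction.fixedPoints ↥M ↥K) = 1 := by
    rw [hfp]; exact Nat.card_unique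
  rwa [hone] at hmod

/-- Key step: if `h` has prime order `r`, conjugation by elements of `⟨h⟩` is
fixed-point-free on the normal subgroup `K`, and `h` commutes with `k ∈ K`
modulo the normal subgroup `Z ≤ K`, then `k ∈ Z`. -/
theorem key_step {G : Type*} [Group G] [Fintype G] (K Z : Subgroup G)
    [hKn : K.Normal] [hZn : Z.Normal] (hZK : Z ≤ K) (h k : G) (hk : k ∈ K)
    {r : ℕ} (hr : r.Prime) (hord : orderOf h = r)
    (hfree : ∀ m ∈ Subgroup.zpowers h, m ≠ 1 → ∀ x ∈ K, m * x * m⁻¹ = x → x = 1)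
    (hcomm : h * k * h⁻¹ * k⁻¹ ∈ Z) : k ∈ Z := by
  haveI : Fact r.Prime := ⟨hr⟩
  set M := Subgroup.zpowers h with hMdef
  have hM : IsPGroup r ↥M :=
    IsPGroup.of_card (by rw [Nat.card_zpowers, hord, pow_one])
  have hne : h ≠ 1 := by
    intro h1
    rw [h1, orderOf_one] at hord
    exact hr.one_lt.ne' hord.symm
  -- |K| ≡ 1 (mod r)
  have hKmod : Nat.card K ≡ 1 [MOD r] :=
    conj_card_modEq_one M K hM h (Subgroup.mem_zpowers h) hne
      (fun x hx => hfree h (Subgroup.mem_zpowers h) hne x hx)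
  -- r ∤ |Z|
  have hnd : ¬ r ∣ Nat.card Z := by
    intro hdvd
    have hdK : r ∣ Nat.card K := hdvd.trans (Subgroup.card_dvd_of_le hZK)
    have h0 : (0 : ℕ) ≡ 1 [MOD r] :=
      (Nat.modEq_zero_iff_dvd.mpr hdK).symm.trans hKmod
    have : (0 : ℕ) % r = 1 % r := h0
    rw [Nat.zero_mod, Nat.mod_eq_of_lt hr.one_lt] at this
    exact one_ne_zero this.symm
  -- h commutes with k in G/Z
  set π := QuotientGroup.mk' Z with hπ
  have hc : Commute (π h) (π k) := by
    have h1 : π ((h * k) * (k * h)⁻¹) = 1 := by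
      rw [show (h * k) * (k * h)⁻¹ = h * k * h⁻¹ * k⁻¹ by group,
        ← MonoidHom.mem_ker, QuotientGroup.ker_mk']
      exact hcomm
    rw [map_mul, map_inv, mul_inv_eq_one, map_mul, map_mul] at h1
    exact h1
  have hmem : ∀ m ∈ M, ∀ z ∈ Z, k⁻¹ * (m * (k * z) * m⁻¹) ∈ Z := by
    intro m hm z hzZ
    obtain ⟨j, rfl⟩ := Subgroup.mem_zpowers_iff.mp hm
    rw [← QuotientGroup.ker_mk' Z, MonoidHom.mem_ker] at hzZ ⊢
    simp only [map_mul, map_inv, map_zpow]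
    rw [hzZ, mul_one]
    have h2 : (π h) ^ j * π k * ((π h) ^ j)⁻¹ = π k := by
      rw [((hc.zpow_left j).eq)]
      group
    rw [h2]
    simp only [← hπ]
    group
  obtain ⟨z, hzZ, hfix⟩ := exists_twisted_fixed M Z hM k hmem hnd
  have hkz : k * z ∈ K := K.mul_mem hk (hZK hzZ)
  have := hfree h (Subgroup.mem_zpowers h) hne (k * z) hkz (hfix h (Subgroup.mem_zpowers h))
  have hkz1 : k = z⁻¹ := by
    rw [← mul_eq_one_iff_eq_inv]
    exact this
  rw [hkz1]
  exact Z.inv_mem hzZ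

/-- Let `G` be a Frobenius group with Frobenius kernel `K`, and let `N` be the
Sylow `p`-subgroup of `K`, with `Z(N)` (which is normal in `G`) properly
contained in `K`.  Then the quotient `Ḡ = G/Z(N)` is again a Frobenius group,
with Frobenius kernel `K/Z(N)`. -/
theorem stmt9 {G : Type*} [Group G] [Fintype G] (p : ℕ) [Fact p.Prime]
    (K N : Subgroup G) (hK : IsFrobeniusKernel K)
    (hNK : N ≤ K) (hSyl : ∃ P : Sylow p G, (P : Subgroup G) = N)
    (hp : p ∣ Nat.card K)
    (Z : Subgroup G) [hZnormal : Z.Normal]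
    (hZdef : Z = Subgroup.map N.subtype (Subgroup.center ↥N))
    (hZK : Z ≠ K) :
    IsFrobeniusKernel (K.map (QuotientGroup.mk' Z)) := by
  obtain ⟨hKnorm, hKbot, hKtop, H, hcompl, hfree⟩ := hK
  have hZleK : Z ≤ K := by
    rw [hZdef]
    exact (Subgroup.map_subtype_le _).trans hNK
  set π := QuotientGroup.mk' Z with hπ
  have hπsurj : Function.Surjective π := QuotientGroup.mk'_surjective Z
  have hkerπ : π.ker = Z := QuotientGroup.ker_mk' Z
  refine ⟨hKnorm.map π hπsurj, ?_, ?_, H.map π, ?_, ?_⟩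
  · -- K.map π ≠ ⊥
    intro heq
    rw [Subgroup.map_eq_bot_iff, hkerπ] at heq
    exact hZK (le_antisymm hZleK heq)
  · -- K.map π ≠ ⊤
    intro heq
    have h1 := congrArg (Subgroup.comap π) heq
    rw [Subgroup.comap_map_eq, hkerπ, sup_of_le_left hZleK] at h1
    rw [h1] at hKtop
    exact hKtop (Subgroup.comap_top π)
  · -- complement
    rw [Subgroup.isComplement'_def, Subgroup.isComplement_iff_existsUnique]
    intro gbar
    obtain ⟨g, rfl⟩ := hπsurj gbar
    obtain ⟨⟨⟨kk, hkk⟩, ⟨hh, hhh⟩⟩, heq, huniq⟩ := hcompl.existsUnique g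
    simp only at heq
    refine ⟨⟨⟨π kk, ⟨kk, hkk, rfl⟩⟩, ⟨π hh, ⟨hh, hhh, rfl⟩⟩⟩, ?_, ?_⟩
    · show π kk * π hh = π g
      rw [← map_mul, heq]
    · rintro ⟨⟨a, ha⟩, ⟨b, hb⟩⟩ hab
      obtain ⟨k₁, hk₁, rfl⟩ := ha
      obtain ⟨h₁, hh₁, rfl⟩ := hb
      simp only at hab
      -- π (k₁ * h₁) = π g, so (k₁ * h₁)⁻¹ * g ∈ Z
      have hZg : (k₁ * h₁)⁻¹ * g ∈ Z := by
        have : π (k₁ * h₁) = π g := by rw [map_mul]; exact hab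
        have h2 : π ((k₁ * h₁)⁻¹ * g) = 1 := by
          rw [map_mul, map_inv, this]
          group
        rwa [← hkerπ]
      set z : G := (k₁ * h₁)⁻¹ * g with hzdef
      have hg : g = k₁ * (h₁ * z * h₁⁻¹) * h₁ := by
        rw [hzdef]; group
      have hmemK : k₁ * (h₁ * z * h₁⁻¹) ∈ K :=
        K.mul_mem hk₁ (hZleK (hZnormal.conj_mem z hZg h₁))
      have := huniq ⟨⟨k₁ * (h₁ * z * h₁⁻¹), hmemK⟩, ⟨h₁, hh₁⟩⟩ (by
        show k₁ * (h₁ * z * h₁⁻¹) * h₁ = g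
        rw [hg])
      have hkeq : kk = k₁ * (h₁ * z * h₁⁻¹) := (congrArg (fun x => (x.1 : G)) this).symm
      have hheq : hh = h₁ := (congrArg (fun x => (x.2 : G)) this).symm
      apply Prod.ext
      · apply Subtype.ext
        show π k₁ = π kk
        rw [hkeq, map_mul]
        have hπ1 : π (h₁ * z * h₁⁻¹) = 1 := by
          rw [← MonoidHom.mem_ker, hkerπ]
          exact hZnormal.conj_mem z hZg h₁
        rw [hπ1, mul_one]
      · apply Subtype.ext
        show π h₁ = π hh
        rw [hheq]
  · -- fixed-point-freeness
    rintro hbar ⟨h, hhH, rfl⟩ hne' kbar ⟨k, hkK, rfl⟩ hcomm'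
    -- h ≠ 1
    have hne : h ≠ 1 := by
      rintro rfl
      exact hne' (map_one π)
    have hordpos : orderOf h ≠ 0 := (orderOf_pos h).ne'
    have hord1 : 1 < orderOf h := by
      have h1 : orderOf h ≠ 1 := fun e => hne (orderOf_eq_one_iff.mp e)
      omega
    set r := (orderOf h).minFac with hrdef
    have hr : r.Prime := Nat.minFac_prime (by omega)
    have hrdvd : r ∣ orderOf h := Nat.minFac_dvd _
    set h' := h ^ (orderOf h / r) with hh'def
    have hordh' : orderOf h' = r := orderOf_pow_orderOf_div hordpos hrdvd
    have hh'H : h' ∈ H := H.pow_mem hhH _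
    have hzple : Subgroup.zpowers h' ≤ H := (Subgroup.zpowers_le).mpr hh'H
    -- h' commutes with k modulo Z
    have hcommZ : h' * k * h'⁻¹ * k⁻¹ ∈ Z := by
      rw [← hkerπ, MonoidHom.mem_ker]
      have hc : Commute (π h) (π k) := by
        have : π h * π k * (π h)⁻¹ = π k := hcomm'
        have h2 : π h * π k = π k * π h := by
          calc π h * π k = (π h * π k * (π h)⁻¹) * π h := by group
            _ = π k * π h := by rw [this]
        exact h2
      have hc' : Commute (π h') (π k) := by
        rw [hh'def, map_pow]
        exact hc.pow_left _
      rw [map_mul, map_mul, map_mul, map_inv, map_inv, hc'.eq]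
      group
    have hkZ : k ∈ Z := key_step K Z hZleK h' k hkK hr hordh'
      (fun m hm hmne x hx hfx => hfree m (hzple hm) hmne x hx hfx) hcommZ
    show π k = 1
    rw [← hkerπ, MonoidHom.mem_ker] at hkZ
    exact hkZ
end

section
/- Let G be a finite group, R a p-adic ring, x ∈ G, and e₁, ..., e_s idempotents commuting with x with 1 = e₁ + ... + e_s orthogonal. For any g₁, ..., g_s ∈ G, the element v = Σ_j e_j x^{g_j^{-1}} is a unit in RG of finite order dividing the order of x. -/
/-- A `p`-adic ring: the integral closure of `ℤ_p` in a finite extension field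
of `ℚ_p`. -/
def IsPadicRing (p : ℕ) [Fact p.Prime] (R : Type*) [CommRing R] : Prop :=
  ∃ (K : Type) (_ : Field K) (_ : Algebra ℚ_[p] K) (_ : Algebra ℤ_[p] K)
    (_ : IsScalarTower ℤ_[p] ℚ_[p] K),
    FiniteDimensional ℚ_[p] K ∧ Nonempty (R ≃+* (integralClosure ℤ_[p] K))

/-- Let `G` be a finite group, `R` a `p`-adic ring, `x ∈ G`, and
`e₁, …, e_s` idempotents commuting with `x` (and with the relevant conjugates
of `x`), with `1 = e₁ + … + e_s` orthogonal.  For any `g₁, …, g_s ∈ G`, the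
element `v = Σ_j e_j x^{g_j⁻¹}` (where `x^{g⁻¹} = g x g⁻¹`) is a unit in `RG`
of finite order dividing the order of `x`. -/
theorem stmt15 {G : Type*} [Group G] [Fintype G] (p : ℕ) [Fact p.Prime]
    {R : Type*} [CommRing R] (hR : IsPadicRing p R)
    (x : G) (s : ℕ) (e : Fin s → MonoidAlgebra R G) (g : Fin s → G)
    (hid : ∀ j, IsIdempotentElem (e j))
    (horth : ∀ i j, i ≠ j → e i * e j = 0)
    (hsum : ∑ j, e j = 1)
    (hcomm : ∀ j, Commute (e j) (MonoidAlgebra.of R G x))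
    (hcomm' : ∀ j, Commute (e j) (MonoidAlgebra.of R G (g j * x * (g j)⁻¹))) :
    ∃ w : (MonoidAlgebra R G)ˣ,
      (w : MonoidAlgebra R G) =
        ∑ j, e j * MonoidAlgebra.of R G (g j * x * (g j)⁻¹) ∧
      orderOf w ∣ orderOf x := by
  classical
  set a : Fin s → MonoidAlgebra R G := fun j => MonoidAlgebra.of R G (g j * x * (g j)⁻¹)
    with ha
  set v : MonoidAlgebra R G := ∑ j, e j * a j with hv
  have key : ∀ n : ℕ, v ^ n = ∑ j, (a j) ^ n * e j := by
    intro n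
    induction n with
    | zero => simp [hsum]
    | succ n ih =>
      rw [pow_succ, ih, hv, Finset.sum_mul_sum]
      rw [Finset.sum_congr rfl (fun i _ => Finset.sum_eq_single i
        (fun j _ hji => by
          rw [mul_assoc, ← mul_assoc (e i), horth i j (Ne.symm hji), zero_mul, mul_zero])
        (by simp))]
      refine Finset.sum_congr rfl fun i _ => ?_
      have h1 : e i * (e i * a i) = e i * a i := by rw [← mul_assoc, hid i]
      have h2 : e i * a i = a i * e i := (hcomm' i).eq
      rw [mul_assoc, h1, h2, ← mul_assoc, ← pow_succ]
  have hx : orderOf x ≠ 0 := (orderOf_pos x).ne'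
  have hvn : v ^ orderOf x = 1 := by
    rw [key]
    have : ∀ j : Fin s, (a j) ^ orderOf x = 1 := by
      intro j
      rw [ha]
      rw [← map_pow]
      have : (g j * x * (g j)⁻¹) ^ orderOf x = 1 := by
        rw [conj_pow, pow_orderOf_eq_one, mul_one, mul_inv_cancel]
      rw [this, map_one]
    simp only [this, one_mul, hsum]
  have hu : IsUnit v := IsUnit.of_pow_eq_one hvn hx
  refine ⟨hu.unit, hu.unit_spec, ?_⟩
  apply orderOf_dvd_of_pow_eq_one
  ext
  rw [Units.val_pow_eq_pow_val, hu.unit_spec, hvn, Units.val_one]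
end

section
/- Let G be a Frobenius group with Frobenius kernel K, N the Sylow p-subgroup of K, L the p-complement of K, x a nontrivial element of N, y an element of the center Z(L), μ a unit of RG for a p-adic ring R, and v = y^μ ∈ RL a torsion unit of augmentation 1. If the partial augmentation ε_{L,y^g}(v) is a nonzero integer for some g ∈ G with y^g ∈ Z(L), then v = y^g and hence xv = x y^g ∈ K. -/
open scoped Classical

section BHhelpers

open Polynomial

lemma msum_zero (t : Multiset ℝ) (h0 : ∀ x ∈ t, (0:ℝ) ≤ x) (hs : t.sum = 0) :
    ∀ x ∈ t, x = 0 := by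
  intro x hx
  obtain ⟨t', rfl⟩ := Multiset.exists_cons_of_mem hx
  rw [Multiset.sum_cons] at hs
  have h1 : (0:ℝ) ≤ t'.sum := Multiset.sum_nonneg fun y hy => h0 y (Multiset.mem_cons_of_mem hy)
  have h2 : (0:ℝ) ≤ x := h0 x (Multiset.mem_cons_self x t')
  linarith

lemma lemA (s : Multiset ℂ) (n : ℤ) (hcard : s.card ≠ 0)
    (habs : ∀ z ∈ s, ‖z‖ = 1)
    (hsum : s.sum = (s.card : ℂ) * n) (hn : n ≠ 0) : ∀ z ∈ s, z = (n : ℂ) := by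
  have hub : ‖s.sum‖ ≤ s.card := by
    calc ‖s.sum‖ ≤ (s.map (fun z => ‖z‖)).sum := by
          simpa using norm_multiset_sum_le s
    _ ≤ s.card := by
          rw [show (s.map fun z => ‖z‖) = s.map fun _ => (1:ℝ) from
            Multiset.map_congr rfl habs]
          simp
  have hc : (0:ℝ) < s.card := by positivity
  have hn1 : n = 1 ∨ n = -1 := by
    rw [hsum] at hub
    have h2 : (s.card : ℝ) * |(n:ℝ)| ≤ s.card := by
      simpa [norm_mul, Complex.norm_intCast, Complex.norm_natCast] using hub
    have h3 : |(n:ℝ)| ≤ 1 := by nlinarith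
    have h4 : |n| ≤ 1 := by exact_mod_cast (by push_cast; exact h3 : |(n:ℤ)| ≤ ((1:ℤ):ℝ))
    have h5 := abs_le.mp h4
    omega
  -- ε := (n : ℂ), with ε⁻¹ = ε and abs ε = 1
  have hne : (n:ℂ) ≠ 0 := by exact_mod_cast hn
  have hεabs : ‖(n:ℂ)‖ = 1 := by
    rcases hn1 with h | h <;> norm_num [h]
  have hεinv : ((n:ℂ))⁻¹ = (n:ℂ) := by
    rcases hn1 with h | h <;> norm_num [h]
  -- the multiset of defects
  set t : Multiset ℝ := s.map (fun z => 1 - ((n:ℂ)⁻¹ * z).re) with ht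
  have h0 : ∀ x ∈ t, (0:ℝ) ≤ x := by
    intro x hx
    rw [ht, Multiset.mem_map] at hx
    obtain ⟨z, hz, rfl⟩ := hx
    have : ((n:ℂ)⁻¹ * z).re ≤ ‖(n:ℂ)⁻¹ * z‖ := Complex.re_le_norm _
    have habs' : ‖(n:ℂ)⁻¹ * z‖ = 1 := by
      rw [norm_mul, hεinv, hεabs, habs z hz, one_mul]
    linarith
  have hts : t.sum = 0 := by
    have hre : (s.map (fun z => ((n:ℂ)⁻¹ * z).re)).sum = ((n:ℂ)⁻¹ * s.sum).re := by
      rw [show ((n:ℂ)⁻¹ * s.sum) = (s.map (fun z => (n:ℂ)⁻¹ * z)).sum by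
        rw [Multiset.sum_map_mul_left]; simp [Multiset.map_id']]
      calc (s.map (fun z => ((n:ℂ)⁻¹ * z).re)).sum
          = ((s.map (fun z => (n:ℂ)⁻¹ * z)).map (fun z : ℂ => z.re)).sum := by
            rw [Multiset.map_map]; rfl
        _ = (s.map (fun z => (n:ℂ)⁻¹ * z)).sum.re :=
            (map_multiset_sum Complex.reAddGroupHom _).symm
    have : t.sum = (s.map (fun _ => (1:ℝ))).sum - (s.map (fun z => ((n:ℂ)⁻¹ * z).re)).sum := by
      rw [ht, ← Multiset.sum_map_sub]
    rw [this, hre, hsum]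
    have : ((n:ℂ)⁻¹ * ((s.card : ℂ) * n)) = (s.card : ℂ) := by
      field_simp
    rw [this]
    simp
  intro z hz
  have hz0 : 1 - ((n:ℂ)⁻¹ * z).re = 0 :=
    msum_zero t h0 hts _ (by rw [ht, Multiset.mem_map]; exact ⟨z, hz, rfl⟩)
  have hre1 : ((n:ℂ)⁻¹ * z).re = 1 := by linarith
  have habs' : ‖(n:ℂ)⁻¹ * z‖ = 1 := by
    rw [norm_mul, hεinv, hεabs, habs z hz, one_mul]
  have him : ((n:ℂ)⁻¹ * z).im = 0 := by
    have := Complex.sq_norm ((n:ℂ)⁻¹ * z)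
    rw [habs', Complex.normSq_apply, hre1] at this
    nlinarith
  have h9 : (n:ℂ) * z = 1 := by rw [← hεinv]; exact Complex.ext hre1 him
  have h10 : (n:ℂ) * (n:ℂ) = 1 := by rcases hn1 with h|h <;> norm_num [h]
  calc z = ((n:ℂ) * (n:ℂ)) * z := by rw [h10, one_mul]
  _ = (n:ℂ) * ((n:ℂ)*z) := by ring
  _ = (n:ℂ) := by rw [h9, mul_one]

lemma lemB {F : Type*} [Field F] [CharZero F] (s : Multiset F) (e : ℕ) (he : 0 < e)
    (n : ℤ) (hcard : s.card ≠ 0) (hz : ∀ z ∈ s, z ^ e = 1)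
    (hsum : s.sum = (s.card : F) * n) (hn : n ≠ 0) : ∀ z ∈ s, z = (n : F) := by
  set T : Set F := {z | z ∈ s} with hT
  have hint : ∀ z ∈ T, IsIntegral ℚ z := by
    intro z hzT
    refine ⟨Polynomial.X ^ e - 1, ?_, ?_⟩
    · simpa using Polynomial.monic_X_pow_sub_C (1:ℚ) he.ne'
    · simp [Polynomial.eval₂_sub, hz z hzT]
  set SF := IntermediateField.adjoin ℚ T with hSF
  haveI halg : Algebra.IsAlgebraic ℚ SF := IntermediateField.isAlgebraic_adjoin hint
  let φ : SF →ₐ[ℚ] ℂ := IsAlgClosed.lift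
  have hφinj : Function.Injective φ := φ.toRingHom.injective
  -- lift elements of s into SF
  have hmem : ∀ z ∈ s, z ∈ SF := fun z hzs => IntermediateField.subset_adjoin ℚ T hzs
  set s' : Multiset SF := s.attach.map (fun z => ⟨z.1, hmem z.1 z.2⟩) with hs'
  have hcard' : s'.card = s.card := by simp [hs']
  have hval : s'.map (fun u : SF => (u : F)) = s := by
    rw [hs', Multiset.map_map]
    exact s.attach_map_val
  have hsum' : s'.sum = (s.card : SF) * (n : SF) := by
    apply Subtype.ext
    push_cast
    rw [show (Multiset.map Subtype.val s') = s from hval]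
    exact hsum
  set S : Multiset ℂ := s'.map φ with hS
  have hScard : S.card = s.card := by simp [hS, hcard']
  have habsS : ∀ u ∈ S, ‖u‖ = 1 := by
    intro u hu
    rw [hS, Multiset.mem_map] at hu
    obtain ⟨a, ha, rfl⟩ := hu
    have haF : (a : F) ∈ s := by
      rw [← hval]; exact Multiset.mem_map_of_mem _ ha
    have hae : a ^ e = 1 := by
      apply Subtype.ext; push_cast; exact hz _ haF
    have : (φ a) ^ e = 1 := by rw [← map_pow, hae, map_one]
    have habs : ‖φ a‖ ^ e = 1 := by
      rw [← norm_pow, this, norm_one]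
    rcases (pow_eq_one_iff_cases).mp habs with h | h | h
    · omega
    · exact h
    · nlinarith [norm_nonneg (φ a)]
  have hsumS : S.sum = (S.card : ℂ) * n := by
    rw [hS, ← map_multiset_sum φ s', hsum', hScard]
    push_cast
    rw [map_mul, map_natCast, map_intCast]
  have := lemA S n (by rw [hScard]; exact hcard) habsS hsumS hn
  intro z hzs
  have hz' : (⟨z, hmem z hzs⟩ : SF) ∈ s' := by
    rw [hs']
    exact Multiset.mem_map_of_mem _ (Multiset.mem_attach _ ⟨z, hzs⟩)
  have : φ ⟨z, hmem z hzs⟩ = (n : ℂ) := this _ (Multiset.mem_map_of_mem _ hz')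
  have : (⟨z, hmem z hzs⟩ : SF) = (n : SF) := by
    apply hφinj; rw [this, map_intCast]
  have := congrArg (fun u : SF => (u : F)) this
  simpa using this

lemma eval_charpoly' {F : Type*} [Field F] {ι : Type*} [Fintype ι] [DecidableEq ι]
    (M : Matrix ι ι F) (t : F) :
    M.charpoly.eval t = (Matrix.diagonal (fun _ : ι => t) - M).det := by
  rw [Matrix.charpoly, show Polynomial.eval t = (Polynomial.evalRingHom t : F[X] →+* F) from rfl,
    RingHom.map_det]
  congr 1
  ext i j
  by_cases h : i = j
  · subst h
    simp [Matrix.charmatrix_apply_eq, Matrix.diagonal_apply_eq, RingHom.mapMatrix_apply,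
      Matrix.map_apply]
  · simp [Matrix.charmatrix_apply_ne _ _ _ h, Matrix.diagonal_apply_ne _ h,
      RingHom.mapMatrix_apply, Matrix.map_apply]

lemma lemC {F : Type*} [Field F] {ι : Type*} [Fintype ι] [DecidableEq ι]
    (M : Matrix ι ι F) (e : ℕ) (hM : M ^ e = 1) (t : F) (ht : t ∈ M.charpoly.roots) :
    t ^ e = 1 := by
  have hroot : M.charpoly.eval t = 0 := by
    have := Polynomial.isRoot_of_mem_roots ht
    exact this
  rw [eval_charpoly'] at hroot
  obtain ⟨v, hv0, hv⟩ := (Matrix.exists_mulVec_eq_zero_iff).mpr hroot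
  have hMv : M.mulVec v = t • v := by
    have h1 : (Matrix.diagonal (fun _ : ι => t)).mulVec v - M.mulVec v = 0 := by
      rw [← Matrix.sub_mulVec]; exact hv
    have h2 : (Matrix.diagonal (fun _ : ι => t)).mulVec v = t • v := by
      ext i; simp [Matrix.mulVec_diagonal, Pi.smul_apply, smul_eq_mul]
    rw [h2] at h1
    exact (sub_eq_zero.mp h1).symm
  have hpow : ∀ j : ℕ, (M ^ j).mulVec v = t ^ j • v := by
    intro j
    induction j with
    | zero => simp [Matrix.one_mulVec]
    | succ j ih =>
      rw [pow_succ, pow_succ, ← Matrix.mulVec_mulVec, hMv, Matrix.mulVec_smul, ih,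
        smul_smul, mul_comm]
  have := hpow e
  rw [hM, Matrix.one_mulVec] at this
  obtain ⟨i, hi⟩ := Function.ne_iff.mp hv0
  have hvi : v i = (t ^ e) * v i := by
    conv_lhs => rw [this]
    simp [Pi.smul_apply, smul_eq_mul]
  have h9 : (t ^ e - 1) * v i = 0 := by rw [sub_mul, one_mul, ← hvi, sub_self]
  rcases mul_eq_zero.mp h9 with h | h
  · exact sub_eq_zero.mp h
  · exact absurd h hi

/-- Berman–Higman over an algebraically closed field of characteristic zero. -/
lemma lemBH {F : Type*} [Field F] [CharZero F] [IsAlgClosed F]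
    {G : Type*} [Group G] [Fintype G]
    (w : MonoidAlgebra F G) (e : ℕ) (he : 0 < e) (hw : w ^ e = 1)
    (n : ℤ) (hn : n ≠ 0) (hw1 : w.coeff 1 = (n : F)) :
    w = MonoidAlgebra.single (1 : G) ((n : ℤ) : F) := by
  set b : Module.Basis G F (MonoidAlgebra F G) := MonoidAlgebra.basis G F with hb
  set T : Module.End F (MonoidAlgebra F G) := LinearMap.mulLeft F w with hT
  set M : Matrix G G F := LinearMap.toMatrixAlgEquiv b T with hM
  have hMpow : M ^ e = 1 := by
    rw [hM, ← map_pow, hT, LinearMap.pow_mulLeft, hw, LinearMap.mulLeft_one,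
      ← Module.End.one_eq_id, map_one]
  have hMentry : ∀ g h : G, M g h = w.coeff (g * h⁻¹) := by
    intro g h
    rw [hM, LinearMap.toMatrixAlgEquiv_apply]
    have hbh : b h = MonoidAlgebra.of F G h := by
      rw [MonoidAlgebra.of_apply]; rfl
    rw [hbh]
    show (w * MonoidAlgebra.of F G h).coeff g = w.coeff (g * h⁻¹)
    rw [MonoidAlgebra.of_apply, MonoidAlgebra.coeff_mul_single_apply, mul_one]
  have htrace : M.trace = (Fintype.card G : F) * (n : F) := by
    rw [Matrix.trace]
    have : ∀ g : G, Matrix.diag M g = (n : F) := by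
      intro g
      rw [Matrix.diag_apply, hMentry g g, mul_inv_cancel, hw1]
    rw [Finset.sum_congr rfl fun g _ => this g]
    simp [mul_comm]
  -- the roots of the characteristic polynomial
  set s : Multiset F := M.charpoly.roots with hs
  have hcardroots : s.card = Fintype.card G := by
    rw [hs, (Polynomial.splits_iff_card_roots).mp (IsAlgClosed.splits M.charpoly),
      Matrix.charpoly_natDegree_eq_dim]
  have hsumroots : s.sum = (s.card : F) * (n : F) := by
    rw [← Matrix.trace_eq_sum_roots_charpoly, htrace, hcardroots]
  have hallroots : ∀ z ∈ s, z = (n : F) :=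
    lemB s e he n (by rw [hcardroots]; exact Fintype.card_ne_zero)
      (fun z hz => lemC M e hMpow z hz) hsumroots hn
  -- charpoly = (X - C n) ^ card G
  have hcharpoly : M.charpoly = (X - C ((n : ℤ) : F)) ^ Fintype.card G := by
    have h1 := (IsAlgClosed.splits M.charpoly).eq_prod_roots_of_monic M.charpoly_monic
    have h2 : Multiset.map (fun a => (X : F[X]) - C a) M.charpoly.roots =
        Multiset.replicate (Fintype.card G) ((X : F[X]) - C ((n : ℤ) : F)) := by
      apply Multiset.eq_replicate.mpr
      constructor
      · rw [Multiset.card_map]; exact hcardroots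
      · intro q hq
        rw [Multiset.mem_map] at hq
        obtain ⟨a, ha, rfl⟩ := hq
        rw [hallroots a ha]
    rw [h1, h2, Multiset.prod_replicate]
  -- minpoly
  haveI : Nonempty G := ⟨1⟩
  have hint : IsIntegral F M := Matrix.isIntegral M
  have hmd1 : minpoly F M ∣ (X : F[X]) ^ e - 1 := by
    apply minpoly.dvd
    rw [map_sub, map_pow, aeval_X, map_one, hMpow, sub_self]
  have hmd2 : minpoly F M ∣ (X - C ((n : ℤ) : F)) ^ Fintype.card G := by
    rw [← hcharpoly]; exact Matrix.minpoly_dvd_charpoly M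
  have hsep : ((X : F[X]) ^ e - 1).Separable := by
    have := Polynomial.separable_X_pow_sub_C (F := F) (1 : F)
      (by exact_mod_cast Nat.cast_ne_zero.mpr he.ne') one_ne_zero
    simpa using this
  have hsqf : Squarefree (minpoly F M) := (hsep.of_dvd hmd1).squarefree
  have hprime : Prime ((X : F[X]) - C ((n : ℤ) : F)) := Polynomial.prime_X_sub_C _
  obtain ⟨i, hi, hassoc⟩ := (dvd_prime_pow hprime _).mp hmd2
  have hi1 : i = 1 := by
    rcases Nat.lt_or_ge i 1 with h | h
    · interval_cases i
      exfalso
      rw [pow_zero] at hassoc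
      have : IsUnit (minpoly F M) := hassoc.isUnit_iff.mpr isUnit_one
      have hdeg : 0 < (minpoly F M).natDegree := minpoly.natDegree_pos hint
      exact (Polynomial.not_isUnit_of_natDegree_pos _ hdeg) this
    · rcases Nat.lt_or_ge i 2 with h2 | h2
      · omega
      · exfalso
        have hdvd : ((X : F[X]) - C ((n : ℤ) : F)) * ((X : F[X]) - C ((n : ℤ) : F)) ∣
            minpoly F M := by
          have : ((X : F[X]) - C ((n : ℤ) : F)) ^ i ∣ minpoly F M := hassoc.symm.dvd
          calc ((X : F[X]) - C ((n : ℤ) : F)) * ((X : F[X]) - C ((n : ℤ) : F))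
              = ((X : F[X]) - C ((n : ℤ) : F)) ^ 2 := (sq _).symm
          _ ∣ ((X : F[X]) - C ((n : ℤ) : F)) ^ i := pow_dvd_pow _ h2
          _ ∣ minpoly F M := this
        exact hprime.not_unit (hsqf _ hdvd)
  rw [hi1, pow_one] at hassoc
  have hminpoly : minpoly F M = (X : F[X]) - C ((n : ℤ) : F) :=
    Polynomial.eq_of_monic_of_associated (minpoly.monic hint) (Polynomial.monic_X_sub_C _) hassoc
  have hMval : M = Matrix.scalar G ((n : ℤ) : F) := by
    have := minpoly.aeval F M
    rw [hminpoly, map_sub, aeval_X, Polynomial.aeval_C, sub_eq_zero] at this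
    rw [this]
    rfl
  -- back to w
  have hTval : T = algebraMap F (Module.End F (MonoidAlgebra F G)) ((n : ℤ) : F) := by
    have h1 : (LinearMap.toMatrixAlgEquiv b) T =
        algebraMap F (Matrix G G F) ((n : ℤ) : F) := by
      rw [← hM, hMval]; rfl
    have := congrArg (LinearMap.toMatrixAlgEquiv b).symm h1
    rw [AlgEquiv.symm_apply_apply] at this
    rw [this, AlgEquiv.commutes]
  have hfinal : w = ((n:ℤ):F) • (1 : MonoidAlgebra F G) := by
    have h2 : T (1 : MonoidAlgebra F G) = w := by
      rw [hT, LinearMap.mulLeft_apply, mul_one]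
    rw [← h2, hTval, Module.algebraMap_end_apply]
  rw [hfinal, MonoidAlgebra.one_def, MonoidAlgebra.smul_single, smul_eq_mul, mul_one]

noncomputable def mapCoeffs {R S : Type*} [CommRing R] [CommRing S] {G : Type*} [Group G]
    (ψ : R →+* S) : MonoidAlgebra R G →+* MonoidAlgebra S G :=
  MonoidAlgebra.liftNCRingHom (MonoidAlgebra.singleOneRingHom.comp ψ)
    (MonoidAlgebra.of S G) (fun r g => by
      simp only [MonoidAlgebra.singleOneRingHom_apply, RingHom.comp_apply,
        MonoidAlgebra.of_apply]
      show MonoidAlgebra.single (1:G) (ψ r) * MonoidAlgebra.single g (1:S) =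
        MonoidAlgebra.single g (1:S) * MonoidAlgebra.single (1:G) (ψ r)
      rw [MonoidAlgebra.single_mul_single, MonoidAlgebra.single_mul_single,
        one_mul, mul_one, one_mul, mul_one])

lemma mapCoeffs_single {R S : Type*} [CommRing R] [CommRing S] {G : Type*} [Group G]
    (ψ : R →+* S) (g : G) (r : R) :
    mapCoeffs ψ (MonoidAlgebra.single g r) = MonoidAlgebra.single g (ψ r) := by
  unfold mapCoeffs
  show MonoidAlgebra.liftNC _ _ _ = _
  rw [MonoidAlgebra.liftNC_single]
  show MonoidAlgebra.single (1:G) (ψ r) * MonoidAlgebra.single g (1:S) = _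
  rw [MonoidAlgebra.single_mul_single, one_mul, mul_one]

lemma mapCoeffs_apply {R S : Type*} [CommRing R] [CommRing S] {G : Type*} [Group G]
    (ψ : R →+* S) (f : MonoidAlgebra R G) (h : G) :
    (mapCoeffs ψ f).coeff h = ψ (f.coeff h) := by
  induction f using MonoidAlgebra.induction_linear with
  | zero => simp
  | add f g hf hg =>
    rw [map_add]
    show (mapCoeffs ψ f + mapCoeffs ψ g).coeff h = _
    rw [MonoidAlgebra.coeff_add, Finsupp.add_apply, hf, hg, MonoidAlgebra.coeff_add, Finsupp.add_apply, map_add]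
  | single g r =>
    rw [mapCoeffs_single]
    rw [MonoidAlgebra.coeff_single, MonoidAlgebra.coeff_single, Finsupp.single_apply, Finsupp.single_apply]
    split_ifs <;> simp

end BHhelpers

/-- Let `G` be a Frobenius group with Frobenius kernel `K`, `N` the Sylow
`p`-subgroup of `K`, `L` the `p`-complement of `K`, `x` a nontrivial element
of `N`, `y ∈ Z(L)`, `μ` a unit of `RG` for a `p`-adic ring `R`, and
`v = y^μ ∈ RL` a torsion unit of augmentation `1`.  If the partial
augmentation `ε_{L,y^g}(v)` is a nonzero integer for some `g ∈ G` with
`y^g ∈ Z(L)`, then `v = y^g` and hence `x·v = x·y^g ∈ K`. -/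

theorem stmt19 {G : Type*} [Group G] [Fintype G] (p : ℕ) [Fact p.Prime]
    (K H N L : Subgroup G)
    (hKnormal : K.Normal) (hKbot : K ≠ ⊥) (hHbot : H ≠ ⊥)
    (hcompl : K.IsComplement' H)
    (hfpf : ∀ h ∈ H, h ≠ 1 → ∀ k ∈ K, h * k * h⁻¹ = k → k = 1)
    (hNK : N ≤ K) (hLK : L ≤ K) (hNnormal : N.Normal) (hLnormal : L.Normal)
    (hNL : N ⊓ L = ⊥) (hNLK : N ⊔ L = K)
    (hSyl : ∃ P : Sylow p G, (P : Subgroup G) = N)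
    (hLp : ¬ p ∣ Nat.card L)
    {R : Type*} [CommRing R] [IsDomain R] [CharZero R] (hR : IsPadicRing p R)
    (x : G) (hx : x ∈ N) (hx1 : x ≠ 1)
    (y : G) (hy : y ∈ L) (hycentral : ∀ l ∈ L, y * l = l * y)
    (μ : (MonoidAlgebra R G)ˣ)
    (v : MonoidAlgebra R G)
    (hv : v = (↑μ⁻¹ : MonoidAlgebra R G) * MonoidAlgebra.of R G y * (↑μ : MonoidAlgebra R G))
    (hvL : ∀ h ∈ v.coeff.support, h ∈ L)
    (hvfin : ∃ k : ℕ, 0 < k ∧ v ^ k = 1)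
    (hvaug : totalAug v = 1)
    (g : G) (hygL : g⁻¹ * y * g ∈ L)
    (hygcentral : ∀ l ∈ L, (g⁻¹ * y * g) * l = l * (g⁻¹ * y * g))
    (n : ℤ) (hn : n ≠ 0)
    (hpa : partialAugL L (g⁻¹ * y * g) v = (n : R)) :
    v = MonoidAlgebra.of R G (g⁻¹ * y * g) ∧
    MonoidAlgebra.of R G x * v = MonoidAlgebra.of R G (x * (g⁻¹ * y * g)) ∧
    x * (g⁻¹ * y * g) ∈ K := by
  set a : G := g⁻¹ * y * g with ha
  -- Step 1: the partial augmentation at the central element a is just the coefficient v a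
  have hfilter : (Finset.univ.filter (fun h => ∃ l ∈ L, l * a * l⁻¹ = h)) = {a} := by
    ext h
    simp only [Finset.mem_filter, Finset.mem_univ, true_and, Finset.mem_singleton]
    constructor
    · rintro ⟨l, hl, rfl⟩
      rw [← hygcentral l hl, mul_assoc, mul_inv_cancel, mul_one]
    · rintro rfl
      exact ⟨1, one_mem L, by rw [one_mul, inv_one, mul_one]⟩
  have hva : v.coeff a = (n : R) := by
    rw [partialAugL, hfilter, Finset.sum_singleton] at hpa
    exact hpa
  -- Step 2: a commutes with v
  have hvcomm : ∀ h : G, v.coeff (a * h) = v.coeff (h * a) := by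
    intro h
    by_cases hL : h ∈ L
    · rw [hygcentral h hL]
    · have h1 : v.coeff (a * h) = 0 := by
        by_contra hne
        have hm : a * h ∈ L := hvL _ (Finsupp.mem_support_iff.mpr hne)
        have : a⁻¹ * (a * h) ∈ L := mul_mem (inv_mem hygL) hm
        rw [← mul_assoc, inv_mul_cancel, one_mul] at this
        exact hL this
      have h2 : v.coeff (h * a) = 0 := by
        by_contra hne
        have hm : h * a ∈ L := hvL _ (Finsupp.mem_support_iff.mpr hne)
        have : (h * a) * a⁻¹ ∈ L := mul_mem hm (inv_mem hygL)
        rw [mul_assoc, mul_inv_cancel, mul_one] at this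
        exact hL this
      rw [h1, h2]
  have hcomm : MonoidAlgebra.single a⁻¹ (1:R) * v = v * MonoidAlgebra.single a⁻¹ (1:R) := by
    ext h
    rw [MonoidAlgebra.coeff_single_mul_apply, MonoidAlgebra.coeff_mul_single_apply, inv_inv, one_mul,
      mul_one]
    exact hvcomm h
  set w : MonoidAlgebra R G := MonoidAlgebra.single a⁻¹ (1:R) * v with hw
  have hw1 : w.coeff 1 = (n : R) := by
    rw [hw, MonoidAlgebra.coeff_single_mul_apply, inv_inv, one_mul, mul_one, hva]
  -- Step 3: w is torsion
  obtain ⟨k, hk, hvk⟩ := hvfin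
  set E : ℕ := k * orderOf a with hE
  have hEpos : 0 < E := Nat.mul_pos hk (orderOf_pos a)
  have haE : a ^ E = 1 := by
    rw [hE, mul_comm, pow_mul, pow_orderOf_eq_one, one_pow]
  have hwE : w ^ E = 1 := by
    have hcommC : Commute (MonoidAlgebra.single a⁻¹ (1:R)) v := hcomm
    rw [hw, hcommC.mul_pow, MonoidAlgebra.single_pow, one_pow, inv_pow, haE, inv_one,
      hE, pow_mul, hvk, one_pow, mul_one]
    rfl
  -- Step 4: transfer to an algebraically closed field and apply Berman–Higman
  set F := AlgebraicClosure (FractionRing R) with hF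
  haveI : CharZero (FractionRing R) :=
    charZero_of_injective_algebraMap (IsFractionRing.injective R (FractionRing R))
  haveI : CharZero F :=
    charZero_of_injective_algebraMap (algebraMap (FractionRing R) F).injective
  set ψ : R →+* F := (algebraMap (FractionRing R) F).comp (algebraMap R (FractionRing R))
    with hψ
  have hψinj : Function.Injective ψ :=
    (algebraMap (FractionRing R) F).injective.comp (IsFractionRing.injective R (FractionRing R))
  set wF : MonoidAlgebra F G := mapCoeffs ψ w with hwF
  have hwFE : wF ^ E = 1 := by rw [hwF, ← map_pow, hwE, map_one]
  have hwF1 : wF.coeff 1 = (n : F) := by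
    rw [hwF, mapCoeffs_apply, hw1, map_intCast]
  have hBH : wF = MonoidAlgebra.single (1 : G) ((n : ℤ) : F) := lemBH wF E hEpos hwFE n hn hwF1
  -- Step 5: pull back
  have hwval : w = MonoidAlgebra.single (1 : G) ((n : ℤ) : R) := by
    ext h
    apply hψinj
    have hco : (mapCoeffs ψ w : MonoidAlgebra F G).coeff h = (MonoidAlgebra.single (1:G) ((n:ℤ):F)).coeff h := by
      rw [← hwF, hBH]
    rw [mapCoeffs_apply] at hco
    rw [hco]
    show _ = ψ ((MonoidAlgebra.single (1:G) ((n:ℤ):R)).coeff h)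
    rw [MonoidAlgebra.coeff_single, MonoidAlgebra.coeff_single, Finsupp.single_apply, Finsupp.single_apply]
    split_ifs <;> simp
  -- Step 6: v = single a n
  have hvsingle : v = MonoidAlgebra.single a ((n : ℤ) : R) := by
    have h9 : MonoidAlgebra.single a (1:R) * w = v := by
      rw [hw, ← mul_assoc, MonoidAlgebra.single_mul_single, mul_inv_cancel, mul_one]
      show (1 : MonoidAlgebra R G) * v = v
      rw [one_mul]
    rw [← h9, hwval, MonoidAlgebra.single_mul_single, mul_one, one_mul]
  -- Step 7: augmentation forces n = 1
  have hn1 : n = 1 := by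
    rw [hvsingle, totalAug, MonoidAlgebra.coeff_single, Finsupp.sum_single_index rfl] at hvaug
    exact_mod_cast hvaug
  have hveq : v = MonoidAlgebra.of R G a := by
    rw [hvsingle, hn1, MonoidAlgebra.of_apply]
    norm_num
  refine ⟨hveq, ?_, mul_mem (hNK hx) (hLK hygL)⟩
  rw [hveq, ← map_mul (MonoidAlgebra.of R G)]
end
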